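/- arXiv:1609.01327 — 7 statements merged into one kernel-verified Lean document; each statement's English description precedes it below -/
import Mathlib

section
/- Let n ≥ 5 and let g = g₁⊗⋯⊗gₙ be a product operator on H_n with each gᵢ ∈ SL(2,ℂ) (det gᵢ = 1). If g|L_n⟩ = |L_n⟩, then g is the identity operator on H_n. -/
open scoped BigOperators Matrix
open MeasureTheory

noncomputable section

/-- The Hilbert space of `n` qubits, identified with `ℂ^(2^n)` via the computational basis:
states are functions on bit strings. -/
abbrev QubitState (n : ℕ) := (Fin n → Fin 2) → ℂ

/-- Action of the product operator `g 0 ⊗ ⋯ ⊗ g (n-1)` on an `n`-qubit state,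
in the computational basis. -/
def prodOp {n : ℕ} (g : Fin n → Matrix (Fin 2) (Fin 2) ℂ) (ψ : QubitState n) : QubitState n :=
  fun x => ∑ y : Fin n → Fin 2, (∏ i, g i (x i) (y i)) * ψ y

/-- The W state `|W_n⟩ = (1/√n)(|10⋯0⟩ + |01⋯0⟩ + ⋯ + |0⋯01⟩)`. -/
def Wstate (n : ℕ) : QubitState n := fun x =>
  ((Real.sqrt (n : ℝ))⁻¹ : ℂ) *
    (if ∃ k : Fin n, x = Function.update (fun _ => (0 : Fin 2)) k 1 then 1 else 0)

/-- The state `|L_n⟩ = (1/√(2(n-1)))(√(n-2)|1⋯1⟩ + √n |W_n⟩)`. -/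
def Lstate (n : ℕ) : QubitState n := fun x =>
  ((Real.sqrt (2 * ((n : ℝ) - 1)))⁻¹ : ℂ) *
    (((Real.sqrt ((n : ℝ) - 2)) : ℂ) * (if ∀ i, x i = 1 then 1 else 0)
      + ((Real.sqrt (n : ℝ)) : ℂ) * Wstate n x)

namespace LTrivAux
variable {n : ℕ}
def E (k : Fin n) : Fin n → Fin 2 := Function.update (fun _ => 0) k 1
lemma E_self (k : Fin n) : E k k = 1 := by simp [E]
lemma E_ne {k i : Fin n} (h : i ≠ k) : E k i = 0 := by simp [E, Function.update_of_ne h]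
lemma E_inj {k k' : Fin n} (h : E k = E k') : k = k' := by
  by_contra hne
  have h1 : E k k = 1 := E_self k
  have h2 : E k' k = 0 := E_ne hne
  rw [h] at h1; rw [h1] at h2; exact one_ne_zero h2
def sC (n : ℕ) : ℂ := ((Real.sqrt ((n : ℝ) - 2)) : ℂ)
def phi0 (n : ℕ) : QubitState n := fun x =>
  sC n * (if ∀ i, x i = 1 then 1 else 0) + (if ∃ k : Fin n, x = E k then 1 else 0)
def T (n : ℕ) (v : Fin n → Fin 2 → ℂ) : ℂ :=
  sC n * ∏ i, v i 1 + ∑ k, v k 1 * ∏ i ∈ Finset.univ.erase k, v i 0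

lemma sum_phi0 (v : Fin n → Fin 2 → ℂ) :
    ∑ x : Fin n → Fin 2, (∏ i, v i (x i)) * phi0 n x = T n v := by
  unfold phi0 T
  simp only [mul_add]
  rw [Finset.sum_add_distrib]
  congr 1
  · rw [Finset.sum_eq_single (fun _ => (1 : Fin 2))]
    · have hc : (∀ i : Fin n, ((fun _ => (1 : Fin 2)) i) = 1) := fun i => rfl
      rw [if_pos hc]
      ring
    · intro x _ hx
      rw [if_neg, mul_zero, mul_zero]
      intro hall
      exact hx (funext hall)
    · intro h
      exact absurd (Finset.mem_univ _) h
  · have step : ∀ x : Fin n → Fin 2,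
        (∏ i, v i (x i)) * (if ∃ k : Fin n, x = E k then 1 else 0)
          = ∑ k, if x = E k then ∏ i, v i (x i) else 0 := by
      intro x
      by_cases h : ∃ k : Fin n, x = E k
      · obtain ⟨k₀, rfl⟩ := h
        rw [if_pos ⟨k₀, rfl⟩, mul_one]
        rw [Finset.sum_eq_single k₀]
        · rw [if_pos rfl]
        · intro k _ hk
          rw [if_neg]
          intro he
          exact hk (E_inj he).symm
        · intro h; exact absurd (Finset.mem_univ _) h
      · rw [if_neg h, mul_zero]
        rw [Finset.sum_eq_zero]
        intro k _
        rw [if_neg (fun he => h ⟨k, he⟩)]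
    rw [Finset.sum_congr rfl (fun x _ => step x), Finset.sum_comm]
    apply Finset.sum_congr rfl
    intro k _
    rw [Finset.sum_ite_eq' Finset.univ (E k) (fun x => ∏ i, v i (x i))]
    rw [if_pos (Finset.mem_univ _)]
    rw [← Finset.mul_prod_erase Finset.univ _ (Finset.mem_univ k)]
    rw [E_self]
    congr 1
    apply Finset.prod_congr rfl
    intro i hi
    rw [E_ne (Finset.mem_erase.mp hi).1]

lemma master (g : Fin n → Matrix (Fin 2) (Fin 2) ℂ)
    (hfix0 : prodOp g (phi0 n) = phi0 n) (v : Fin n → Fin 2 → ℂ) :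
    T n (fun i u => v i 0 * g i 0 u + v i 1 * g i 1 u) = T n v := by
  rw [← sum_phi0 v, ← sum_phi0 (fun i u => v i 0 * g i 0 u + v i 1 * g i 1 u)]
  calc ∑ y : Fin n → Fin 2, (∏ i, (v i 0 * g i 0 (y i) + v i 1 * g i 1 (y i))) * phi0 n y
      = ∑ x : Fin n → Fin 2, (∏ i, v i (x i)) * prodOp g (phi0 n) x := by
        unfold prodOp
        simp only [Finset.mul_sum]
        rw [Finset.sum_comm]
        apply Finset.sum_congr rfl
        intro y _
        have h1 : ∀ x : Fin n → Fin 2,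
            (∏ i, v i (x i)) * ((∏ i, g i (x i) (y i)) * phi0 n y)
              = (∏ i, v i (x i) * g i (x i) (y i)) * phi0 n y := by
          intro x
          rw [Finset.prod_mul_distrib, mul_assoc]
        rw [Finset.sum_congr rfl (fun x _ => h1 x), ← Finset.sum_mul]
        congr 1
        have h2 : ∀ i : Fin n, (v i 0 * g i 0 (y i) + v i 1 * g i 1 (y i))
            = ∑ t : Fin 2, v i t * g i t (y i) := fun i => (Fin.sum_univ_two (fun t => v i t * g i t (y i))).symm
        rw [Finset.prod_congr rfl (fun i _ => h2 i), Finset.prod_univ_sum,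
          Fintype.piFinset_univ]
    _ = ∑ x : Fin n → Fin 2, (∏ i, v i (x i)) * phi0 n x := by rw [hfix0]

lemma exists_ne4 (hn : 5 ≤ n) (a b c d : Fin n) :
    ∃ i : Fin n, i ≠ a ∧ i ≠ b ∧ i ≠ c ∧ i ≠ d := by
  by_contra h
  push_neg at h
  have hsub : (Finset.univ : Finset (Fin n)) ⊆ {a, b, c, d} := by
    intro i _
    simp only [Finset.mem_insert, Finset.mem_singleton]
    by_cases h1 : i = a
    · tauto
    by_cases h2 : i = b
    · tauto
    by_cases h3 : i = c
    · tauto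
    exact Or.inr (Or.inr (Or.inr (h i h1 h2 h3)))
  have hcard := Finset.card_le_card hsub
  have h4 : ({a, b, c, d} : Finset (Fin n)).card ≤ 4 := by
    apply le_trans (Finset.card_insert_le _ _)
    have h3 : ({b, c, d} : Finset (Fin n)).card ≤ 3 := by
      apply le_trans (Finset.card_insert_le _ _)
      have h2 : ({c, d} : Finset (Fin n)).card ≤ 2 := by
        apply le_trans (Finset.card_insert_le _ _)
        simp
      omega
    omega
  rw [Finset.card_univ, Fintype.card_fin] at hcard
  omega

lemma exists_ne3 (hn : 5 ≤ n) (a b c : Fin n) :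
    ∃ i : Fin n, i ≠ a ∧ i ≠ b ∧ i ≠ c := by
  obtain ⟨i, h1, h2, h3, _⟩ := exists_ne4 hn a b c c
  exact ⟨i, h1, h2, h3⟩

lemma prod_erase_two (f : Fin n → ℂ) (p q r : Fin n) (hpq : p ≠ q) (hpr : p ≠ r) (hqr : q ≠ r)
    (hone : ∀ i, i ≠ p → i ≠ q → i ≠ r → f i = 1) :
    ∏ i ∈ Finset.univ.erase p, f i = f q * f r := by
  have hq : q ∈ Finset.univ.erase p := Finset.mem_erase.mpr ⟨hpq.symm, Finset.mem_univ q⟩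
  have hr : r ∈ (Finset.univ.erase p).erase q :=
    Finset.mem_erase.mpr ⟨hqr.symm, Finset.mem_erase.mpr ⟨hpr.symm, Finset.mem_univ r⟩⟩
  rw [← Finset.mul_prod_erase _ _ hq, ← Finset.mul_prod_erase _ _ hr,
    Finset.prod_eq_one, mul_one]
  intro i hi
  have h1 := Finset.mem_erase.mp hi
  have h2 := Finset.mem_erase.mp h1.2
  have h3 := Finset.mem_erase.mp h2.2
  exact hone i h3.1 h2.1 h1.1

lemma T_eq_H2 (v : Fin n → Fin 2 → ℂ) (j l : Fin n) (hjl : j ≠ l)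
    (hj0 : v j 0 = 0) (hl0 : v l 0 = 0) :
    T n v = sC n * ∏ i, v i 1 := by
  unfold T
  have hs : ∑ k, v k 1 * ∏ i ∈ Finset.univ.erase k, v i 0 = 0 := by
    apply Finset.sum_eq_zero
    intro k _
    by_cases hk : k = j
    · subst hk
      have hl : l ∈ Finset.univ.erase k := Finset.mem_erase.mpr ⟨(Ne.symm hjl), Finset.mem_univ l⟩
      rw [Finset.prod_eq_zero hl hl0, mul_zero]
    · have hj : j ∈ Finset.univ.erase k :=
        Finset.mem_erase.mpr ⟨fun he => hk he.symm, Finset.mem_univ j⟩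
      rw [Finset.prod_eq_zero hj hj0, mul_zero]
  rw [hs, add_zero]

lemma T_eq_H1 (hn : 5 ≤ n) (v : Fin n → Fin 2 → ℂ) (j l m : Fin n)
    (hjl : j ≠ l) (hjm : j ≠ m) (hlm : l ≠ m)
    (hk : ∀ i, i ≠ j → i ≠ l → i ≠ m → v i 0 = 0 ∧ v i 1 = 1) :
    T n v = sC n * (v j 1 * (v l 1 * v m 1)) := by
  unfold T
  have hs : ∑ k, v k 1 * ∏ i ∈ Finset.univ.erase k, v i 0 = 0 := by
    apply Finset.sum_eq_zero
    intro k _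
    obtain ⟨i₀, h1, h2, h3, h4⟩ := exists_ne4 hn k j l m
    have hi : i₀ ∈ Finset.univ.erase k := Finset.mem_erase.mpr ⟨h1, Finset.mem_univ i₀⟩
    rw [Finset.prod_eq_zero hi (hk i₀ h2 h3 h4).1, mul_zero]
  rw [hs, add_zero]
  congr 1
  rw [← Finset.mul_prod_erase _ _ (Finset.mem_univ j),
    prod_erase_two (fun i => v i 1) j l m hjl hjm hlm (fun i a b c => (hk i a b c).2)]

lemma T_eq_H3 (hn : 5 ≤ n) (v : Fin n → Fin 2 → ℂ) (j l m : Fin n)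
    (hjl : j ≠ l) (hjm : j ≠ m) (hlm : l ≠ m)
    (hk : ∀ i, i ≠ j → i ≠ l → i ≠ m → v i 0 = 1 ∧ v i 1 = 0) :
    T n v = v j 1 * (v l 0 * v m 0) + v l 1 * (v j 0 * v m 0) + v m 1 * (v j 0 * v l 0) := by
  unfold T
  obtain ⟨i₀, h1, h2, h3⟩ := exists_ne3 hn j l m
  have hp1 : ∏ i, v i 1 = 0 :=
    Finset.prod_eq_zero (Finset.mem_univ i₀) (hk i₀ h1 h2 h3).2
  rw [hp1, mul_zero, zero_add]
  have hj : j ∈ (Finset.univ : Finset (Fin n)) := Finset.mem_univ j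
  have hl : l ∈ Finset.univ.erase j := Finset.mem_erase.mpr ⟨Ne.symm hjl, Finset.mem_univ l⟩
  have hm : m ∈ (Finset.univ.erase j).erase l :=
    Finset.mem_erase.mpr ⟨Ne.symm hlm, Finset.mem_erase.mpr ⟨Ne.symm hjm, Finset.mem_univ m⟩⟩
  rw [← Finset.add_sum_erase _ _ hj, ← Finset.add_sum_erase _ _ hl, ← Finset.add_sum_erase _ _ hm]
  have hrest : ∑ k ∈ ((Finset.univ.erase j).erase l).erase m,
      (v k 1 * ∏ i ∈ Finset.univ.erase k, v i 0) = 0 := by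
    apply Finset.sum_eq_zero
    intro k hkm
    have a1 := Finset.mem_erase.mp hkm
    have a2 := Finset.mem_erase.mp a1.2
    have a3 := Finset.mem_erase.mp a2.2
    rw [(hk k a3.1 a2.1 a1.1).2, zero_mul]
  rw [hrest, add_zero]
  rw [prod_erase_two (fun i => v i 0) j l m hjl hjm hlm (fun i a b c => (hk i a b c).1)]
  rw [prod_erase_two (fun i => v i 0) l j m (Ne.symm hjl) hlm hjm
    (fun i a b c => (hk i b a c).1)]
  rw [prod_erase_two (fun i => v i 0) m j l (Ne.symm hjm) (Ne.symm hlm) hjl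
    (fun i a b c => (hk i b c a).1)]
  ring


lemma sC_ne (hn : 5 ≤ n) : sC n ≠ 0 := by
  have h : (0 : ℝ) < (n : ℝ) - 2 := by
    have : (5 : ℝ) ≤ (n : ℝ) := by exact_mod_cast hn
    linarith
  simp only [sC, ne_eq, Complex.ofReal_eq_zero]
  exact ne_of_gt (Real.sqrt_pos.mpr h)

lemma R1 (hn : 5 ≤ n) (g : Fin n → Matrix (Fin 2) (Fin 2) ℂ)
    (hdet' : ∀ i, g i 0 0 * g i 1 1 - g i 0 1 * g i 1 0 = 1)
    (hfix0 : prodOp g (phi0 n) = phi0 n)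
    {j l m : Fin n} (hjl : j ≠ l) (hjm : j ≠ m) (hlm : l ≠ m) :
    g j 1 1 * (g l 1 1 * g m 0 1) = 0 := by
  classical
  set v : Fin n → Fin 2 → ℂ := fun i =>
    if i = j then ![0, 1] else if i = l then ![0, 1]
    else if i = m then ![1, 0] else ![-(g i 1 0), g i 0 0] with hv
  set w : Fin n → Fin 2 → ℂ := fun i u => v i 0 * g i 0 u + v i 1 * g i 1 u with hw
  have hvj : v j = ![0, 1] := by rw [hv]; simp
  have hvl : v l = ![0, 1] := by rw [hv]; simp [Ne.symm hjl]
  have hvm : v m = ![1, 0] := by rw [hv]; simp [Ne.symm hjm, Ne.symm hlm]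
  have hvo : ∀ i, i ≠ j → i ≠ l → i ≠ m → v i = ![-(g i 1 0), g i 0 0] := by
    intro i h1 h2 h3; rw [hv]; simp [h1, h2, h3]
  have hwj1 : w j 1 = g j 1 1 := by rw [hw]; simp [hvj]
  have hwl1 : w l 1 = g l 1 1 := by rw [hw]; simp [hvl]
  have hwm1 : w m 1 = g m 0 1 := by rw [hw]; simp [hvm]
  have hwk : ∀ i, i ≠ j → i ≠ l → i ≠ m → w i 0 = 0 ∧ w i 1 = 1 := by
    intro i h1 h2 h3
    constructor
    · rw [hw]; simp only [hvo i h1 h2 h3, Matrix.cons_val_zero, Matrix.cons_val_one,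
        Matrix.head_cons]
      ring
    · rw [hw]; simp only [hvo i h1 h2 h3, Matrix.cons_val_zero, Matrix.cons_val_one,
        Matrix.head_cons]
      linear_combination hdet' i
  have hM := master g hfix0 v
  rw [← hw] at hM
  have hTw : T n w = sC n * (g j 1 1 * (g l 1 1 * g m 0 1)) := by
    rw [T_eq_H1 hn w j l m hjl hjm hlm hwk, hwj1, hwl1, hwm1]
  have hTv : T n v = 0 := by
    rw [T_eq_H2 v j l hjl (by rw [hvj]; simp) (by rw [hvl]; simp),
      Finset.prod_eq_zero (Finset.mem_univ m) (show v m 1 = 0 by rw [hvm]; simp), mul_zero]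
  rw [hTw, hTv] at hM
  exact (mul_eq_zero.mp hM).resolve_left (sC_ne hn)

lemma R2 (hn : 5 ≤ n) (g : Fin n → Matrix (Fin 2) (Fin 2) ℂ)
    (hdet' : ∀ i, g i 0 0 * g i 1 1 - g i 0 1 * g i 1 0 = 1)
    (hfix0 : prodOp g (phi0 n) = phi0 n)
    {j l : Fin n} (hjl : j ≠ l) :
    g j 1 1 * g l 1 1 = ∏ i ∈ (Finset.univ.erase j).erase l, g i 0 0 := by
  classical
  obtain ⟨m, hmj, hml, -⟩ := exists_ne3 hn j l l
  set v : Fin n → Fin 2 → ℂ := fun i =>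
    if i = j then ![0, 1] else if i = l then ![0, 1] else ![-(g i 1 0), g i 0 0] with hv
  set w : Fin n → Fin 2 → ℂ := fun i u => v i 0 * g i 0 u + v i 1 * g i 1 u with hw
  have hvj : v j = ![0, 1] := by rw [hv]; simp
  have hvl : v l = ![0, 1] := by rw [hv]; simp [Ne.symm hjl]
  have hvo : ∀ i, i ≠ j → i ≠ l → v i = ![-(g i 1 0), g i 0 0] := by
    intro i h1 h2; rw [hv]; simp [h1, h2]
  have hwj1 : w j 1 = g j 1 1 := by rw [hw]; simp [hvj]
  have hwl1 : w l 1 = g l 1 1 := by rw [hw]; simp [hvl]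
  have hwk : ∀ i, i ≠ j → i ≠ l → w i 0 = 0 ∧ w i 1 = 1 := by
    intro i h1 h2
    constructor
    · rw [hw]; simp only [hvo i h1 h2, Matrix.cons_val_zero, Matrix.cons_val_one,
        Matrix.head_cons]
      ring
    · rw [hw]; simp only [hvo i h1 h2, Matrix.cons_val_zero, Matrix.cons_val_one,
        Matrix.head_cons]
      linear_combination hdet' i
  have hM := master g hfix0 v
  rw [← hw] at hM
  have hTw : T n w = sC n * (g j 1 1 * g l 1 1) := by
    rw [T_eq_H1 hn w j l m hjl (Ne.symm hmj) (Ne.symm hml)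
      (fun i a b _ => hwk i a b), hwj1, hwl1, (hwk m hmj hml).2, mul_one]
  have hTv : T n v = sC n * ∏ i ∈ (Finset.univ.erase j).erase l, g i 0 0 := by
    rw [T_eq_H2 v j l hjl (by rw [hvj]; simp) (by rw [hvl]; simp)]
    congr 1
    have hlmem : l ∈ Finset.univ.erase j :=
      Finset.mem_erase.mpr ⟨Ne.symm hjl, Finset.mem_univ l⟩
    rw [← Finset.mul_prod_erase _ _ (Finset.mem_univ j), ← Finset.mul_prod_erase _ _ hlmem]
    rw [show v j 1 = 1 by rw [hvj]; simp, show v l 1 = 1 by rw [hvl]; simp, one_mul, one_mul]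
    apply Finset.prod_congr rfl
    intro i hi
    have h1 := Finset.mem_erase.mp hi
    have h2 := Finset.mem_erase.mp h1.2
    rw [hvo i h2.1 h1.1]
    simp
  rw [hTw, hTv] at hM
  exact mul_left_cancel₀ (sC_ne hn) hM

lemma R3 (hn : 5 ≤ n) (g : Fin n → Matrix (Fin 2) (Fin 2) ℂ)
    (hdet' : ∀ i, g i 0 0 * g i 1 1 - g i 0 1 * g i 1 0 = 1)
    (hfix0 : prodOp g (phi0 n) = phi0 n)
    {j l m : Fin n} (hjl : j ≠ l) (hjm : j ≠ m) (hlm : l ≠ m) :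
    g j 1 1 * (g l 1 0 * g m 0 0) + g l 1 1 * (g j 1 0 * g m 0 0)
      + g m 0 1 * (g j 1 0 * g l 1 0) = 0 := by
  classical
  set v : Fin n → Fin 2 → ℂ := fun i =>
    if i = j then ![0, 1] else if i = l then ![0, 1]
    else if i = m then ![1, 0] else ![g i 1 1, -(g i 0 1)] with hv
  set w : Fin n → Fin 2 → ℂ := fun i u => v i 0 * g i 0 u + v i 1 * g i 1 u with hw
  have hvj : v j = ![0, 1] := by rw [hv]; simp
  have hvl : v l = ![0, 1] := by rw [hv]; simp [Ne.symm hjl]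
  have hvm : v m = ![1, 0] := by rw [hv]; simp [Ne.symm hjm, Ne.symm hlm]
  have hvo : ∀ i, i ≠ j → i ≠ l → i ≠ m → v i = ![g i 1 1, -(g i 0 1)] := by
    intro i h1 h2 h3; rw [hv]; simp [h1, h2, h3]
  have hwj1 : w j 1 = g j 1 1 := by rw [hw]; simp [hvj]
  have hwj0 : w j 0 = g j 1 0 := by rw [hw]; simp [hvj]
  have hwl1 : w l 1 = g l 1 1 := by rw [hw]; simp [hvl]
  have hwl0 : w l 0 = g l 1 0 := by rw [hw]; simp [hvl]
  have hwm1 : w m 1 = g m 0 1 := by rw [hw]; simp [hvm]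
  have hwm0 : w m 0 = g m 0 0 := by rw [hw]; simp [hvm]
  have hwk : ∀ i, i ≠ j → i ≠ l → i ≠ m → w i 0 = 1 ∧ w i 1 = 0 := by
    intro i h1 h2 h3
    constructor
    · rw [hw]; simp only [hvo i h1 h2 h3, Matrix.cons_val_zero, Matrix.cons_val_one,
        Matrix.head_cons]
      linear_combination hdet' i
    · rw [hw]; simp only [hvo i h1 h2 h3, Matrix.cons_val_zero, Matrix.cons_val_one,
        Matrix.head_cons]
      ring
  have hM := master g hfix0 v
  rw [← hw] at hM
  have hTw : T n w = g j 1 1 * (g l 1 0 * g m 0 0) + g l 1 1 * (g j 1 0 * g m 0 0)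
      + g m 0 1 * (g j 1 0 * g l 1 0) := by
    rw [T_eq_H3 hn w j l m hjl hjm hlm hwk, hwj1, hwj0, hwl1, hwl0, hwm1, hwm0]
  have hTv : T n v = 0 := by
    rw [T_eq_H2 v j l hjl (by rw [hvj]; simp) (by rw [hvl]; simp),
      Finset.prod_eq_zero (Finset.mem_univ m) (show v m 1 = 0 by rw [hvm]; simp), mul_zero]
  rw [hTw, hTv] at hM
  exact hM


lemma two_cases : ∀ t : Fin 2, t = 0 ∨ t = 1 := by decide

lemma diag_eval (g : Fin n → Matrix (Fin 2) (Fin 2) ℂ)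
    (hb : ∀ i, g i 0 1 = 0) (hc : ∀ i, g i 1 0 = 0) (ψ : QubitState n) (x : Fin n → Fin 2) :
    prodOp g ψ x = (∏ i, g i (x i) (x i)) * ψ x := by
  unfold prodOp
  rw [Finset.sum_eq_single x]
  · intro y _ hyx
    have hex : ∃ i, y i ≠ x i := by
      by_contra h
      push_neg at h
      exact hyx (funext h)
    obtain ⟨i₀, hi⟩ := hex
    apply mul_eq_zero_of_left
    apply Finset.prod_eq_zero (Finset.mem_univ i₀)
    rcases two_cases (x i₀) with h | h <;> rcases two_cases (y i₀) with h' | h'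
    · exact absurd (h'.trans h.symm) hi
    · rw [h, h']; exact hb i₀
    · rw [h, h']; exact hc i₀
    · exact absurd (h'.trans h.symm) hi
  · intro h
    exact absurd (Finset.mem_univ x) h

lemma sqn_ne (hn : 5 ≤ n) : ((Real.sqrt (n : ℝ) : ℂ)) ≠ 0 := by
  have h : (0 : ℝ) < (n : ℝ) := by
    have : (5 : ℝ) ≤ (n : ℝ) := by exact_mod_cast hn
    linarith
  simp only [ne_eq, Complex.ofReal_eq_zero]
  exact ne_of_gt (Real.sqrt_pos.mpr h)

lemma c0_ne (hn : 5 ≤ n) : ((Real.sqrt (2 * ((n : ℝ) - 1)))⁻¹ : ℂ) ≠ 0 := by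
  have h : (0 : ℝ) < 2 * ((n : ℝ) - 1) := by
    have : (5 : ℝ) ≤ (n : ℝ) := by exact_mod_cast hn
    linarith
  apply inv_ne_zero
  simp only [ne_eq, Complex.ofReal_eq_zero]
  exact ne_of_gt (Real.sqrt_pos.mpr h)

lemma Lstate_ones (hn : 5 ≤ n) :
    Lstate n (fun _ => 1) = ((Real.sqrt (2 * ((n : ℝ) - 1)))⁻¹ : ℂ) * sC n := by
  unfold Lstate Wstate
  have hcond2 : ¬ ∃ k : Fin n, (fun _ => (1 : Fin 2))
      = Function.update (fun _ => (0 : Fin 2)) k 1 := by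
    rintro ⟨k, hk⟩
    obtain ⟨i, hi, -, -⟩ := exists_ne3 hn k k k
    have h := congrFun hk i
    rw [Function.update_of_ne hi] at h
    exact (by decide : (1 : Fin 2) ≠ 0) h
  rw [if_pos (fun i => rfl), if_neg hcond2]
  unfold sC
  ring

lemma Lstate_E (hn : 5 ≤ n) (j : Fin n) :
    Lstate n (E j) = ((Real.sqrt (2 * ((n : ℝ) - 1)))⁻¹ : ℂ) := by
  unfold Lstate Wstate
  have hcond1 : ¬ ∀ i, E j i = 1 := by
    intro hall
    obtain ⟨i, hi, -, -⟩ := exists_ne3 hn j j j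
    have h := hall i
    rw [E_ne hi] at h
    exact (by decide : (0 : Fin 2) ≠ 1) h
  have hcond2 : ∃ k : Fin n, E j = Function.update (fun _ => (0 : Fin 2)) k 1 := ⟨j, rfl⟩
  rw [if_neg hcond1, if_pos hcond2]
  have h1 : ((Real.sqrt (n : ℝ) : ℂ)) * ((Real.sqrt (n : ℝ))⁻¹ : ℂ) = 1 :=
    mul_inv_cancel₀ (sqn_ne hn)
  calc ((Real.sqrt (2 * ((n : ℝ) - 1)))⁻¹ : ℂ) *
        (((Real.sqrt ((n : ℝ) - 2)) : ℂ) * 0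
          + ((Real.sqrt (n : ℝ)) : ℂ) * (((Real.sqrt (n : ℝ))⁻¹ : ℂ) * 1))
      = ((Real.sqrt (2 * ((n : ℝ) - 1)))⁻¹ : ℂ) *
        (((Real.sqrt (n : ℝ) : ℂ)) * ((Real.sqrt (n : ℝ))⁻¹ : ℂ)) := by ring
    _ = ((Real.sqrt (2 * ((n : ℝ) - 1)))⁻¹ : ℂ) := by rw [h1, mul_one]

end LTrivAux

/-- For `n ≥ 5`, any product operator `g = g₁ ⊗ ⋯ ⊗ gₙ` with `det gᵢ = 1` fixing `|L_n⟩`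
is the identity operator on `H_n`. -/
theorem Lstate_trivial_SL_stabilizer (n : ℕ) (hn : 5 ≤ n)
    (g : Fin n → Matrix (Fin 2) (Fin 2) ℂ) (hdet : ∀ i, (g i).det = 1)
    (hfix : prodOp g (Lstate n) = Lstate n) :
    ∀ φ : QubitState n, prodOp g φ = φ := by
  classical
  have hdet' : ∀ i, g i 0 0 * g i 1 1 - g i 0 1 * g i 1 0 = 1 := by
    intro i
    have h := hdet i
    rwa [Matrix.det_fin_two] at h
  have hc0 := LTrivAux.c0_ne hn
  have hsqn := LTrivAux.sqn_ne hn
  have hLphi : ∀ x, Lstate n x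
      = ((Real.sqrt (2 * ((n : ℝ) - 1)))⁻¹ : ℂ) * LTrivAux.phi0 n x := by
    intro x
    unfold Lstate Wstate LTrivAux.phi0 LTrivAux.sC LTrivAux.E
    congr 1
    rw [← mul_assoc, mul_inv_cancel₀ hsqn, one_mul]
  have hfix0 : prodOp g (LTrivAux.phi0 n) = LTrivAux.phi0 n := by
    funext x
    have h := congrFun hfix x
    have hexp : prodOp g (Lstate n) x
        = ((Real.sqrt (2 * ((n : ℝ) - 1)))⁻¹ : ℂ) * prodOp g (LTrivAux.phi0 n) x := by
      unfold prodOp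
      rw [Finset.mul_sum]
      apply Finset.sum_congr rfl
      intro y _
      rw [hLphi y]
      ring
    rw [hexp, hLphi x] at h
    exact mul_left_cancel₀ hc0 h
  by_cases hd : ∀ i, g i 1 1 ≠ 0
  · -- all diagonal entries d nonzero
    have hb : ∀ m, g m 0 1 = 0 := by
      intro m
      obtain ⟨j, hj1, -, -⟩ := LTrivAux.exists_ne3 hn m m m
      obtain ⟨l, hl1, hl2, -, -⟩ := LTrivAux.exists_ne4 hn m j j j
      have h := LTrivAux.R1 hn g hdet' hfix0 (Ne.symm hl2) hj1 hl1
      rcases mul_eq_zero.mp h with h' | h'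
      · exact absurd h' (hd j)
      rcases mul_eq_zero.mp h' with h'' | h''
      · exact absurd h'' (hd l)
      · exact h''
    have had : ∀ i, g i 0 0 * g i 1 1 = 1 := by
      intro i
      have h := hdet' i
      rw [hb i] at h
      linear_combination h
    have ha : ∀ i, g i 0 0 ≠ 0 := fun i => left_ne_zero_of_mul_eq_one (had i)
    have hcd : ∀ j l, j ≠ l → g j 1 1 * g l 1 0 + g l 1 1 * g j 1 0 = 0 := by
      intro j l hjl
      obtain ⟨m, hm1, hm2, -⟩ := LTrivAux.exists_ne3 hn j l l
      have h := LTrivAux.R3 hn g hdet' hfix0 hjl (Ne.symm hm1) (Ne.symm hm2)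
      have h2 : (g j 1 1 * g l 1 0 + g l 1 1 * g j 1 0) * g m 0 0 = 0 := by
        linear_combination h - (g j 1 0 * g l 1 0) * hb m
      exact (mul_eq_zero.mp h2).resolve_right (ha m)
    have hc : ∀ i, g i 1 0 = 0 := by
      by_contra hcc
      push_neg at hcc
      obtain ⟨t, ht⟩ := hcc
      have hall : ∀ i, g i 1 0 ≠ 0 := by
        intro i
        by_cases hit : i = t
        · rw [hit]; exact ht
        · intro hi0
          have h := hcd t i (fun he => hit he.symm)
          rw [hi0] at h
          have h2 : g i 1 1 * g t 1 0 = 0 := by linear_combination h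
          rcases mul_eq_zero.mp h2 with h' | h'
          · exact (hd i) h'
          · exact ht h'
      obtain ⟨l, hl1, -, -⟩ := LTrivAux.exists_ne3 hn t t t
      obtain ⟨m, hm1, hm2, -, -⟩ := LTrivAux.exists_ne4 hn t l l l
      have X := hcd t l (Ne.symm hl1)
      have Y := hcd t m (Ne.symm hm1)
      have Z := hcd l m (Ne.symm hm2)
      have h2 : (2 : ℂ) * (g l 1 1 * (g t 1 0 * g m 1 0)) = 0 := by
        linear_combination (g m 1 0) * X - (g l 1 0) * Y + (g t 1 0) * Z
      have h3 : g l 1 1 * (g t 1 0 * g m 1 0) = 0 :=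
        (mul_eq_zero.mp h2).resolve_left two_ne_zero
      rcases mul_eq_zero.mp h3 with h' | h'
      · exact (hd l) h'
      rcases mul_eq_zero.mp h' with h'' | h''
      · exact (hall t) h''
      · exact (hall m) h''
    -- now g is diagonal
    have hdiag := LTrivAux.diag_eval g hb hc
    have hLone_ne : Lstate n (fun _ => 1) ≠ 0 := by
      rw [LTrivAux.Lstate_ones hn]
      exact mul_ne_zero hc0 (LTrivAux.sC_ne hn)
    have hD : ∏ i, g i 1 1 = 1 := by
      have h := congrFun hfix (fun _ => 1)
      rw [hdiag] at h
      have h2 : (∏ i, g i ((fun _ : Fin n => (1 : Fin 2)) i) ((fun _ : Fin n => (1 : Fin 2)) i))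
          = 1 := mul_right_cancel₀ hLone_ne (h.trans (one_mul _).symm)
      exact h2
    have hEj : ∀ j, g j 1 1 * ∏ i ∈ Finset.univ.erase j, g i 0 0 = 1 := by
      intro j
      have h := congrFun hfix (LTrivAux.E j)
      rw [hdiag] at h
      have hLE_ne : Lstate n (LTrivAux.E j) ≠ 0 := by
        rw [LTrivAux.Lstate_E hn j]
        exact hc0
      have h2 : (∏ i, g i (LTrivAux.E j i) (LTrivAux.E j i)) = 1 :=
        mul_right_cancel₀ hLE_ne (h.trans (one_mul _).symm)
      rw [← Finset.mul_prod_erase _ _ (Finset.mem_univ j), LTrivAux.E_self] at h2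
      rw [← h2]
      congr 1
      apply Finset.prod_congr rfl
      intro i hi
      rw [LTrivAux.E_ne (Finset.mem_erase.mp hi).1]
    have hprodad : (∏ i, g i 0 0) * ∏ i, g i 1 1 = 1 := by
      rw [← Finset.prod_mul_distrib, Finset.prod_congr rfl (fun i _ => had i)]
      exact Finset.prod_const_one
    have hprodA : ∏ i, g i 0 0 = 1 := by
      rw [hD, mul_one] at hprodad
      exact hprodad
    have haj_eq : ∀ j, g j 1 1 = g j 0 0 := by
      intro j
      have h1 : g j 0 0 * ∏ i ∈ Finset.univ.erase j, g i 0 0 = 1 := by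
        rw [← hprodA]
        exact Finset.mul_prod_erase Finset.univ (fun i => g i 0 0) (Finset.mem_univ j)
      have hPne : (∏ i ∈ Finset.univ.erase j, g i 0 0) ≠ 0 :=
        right_ne_zero_of_mul_eq_one h1
      have h2 : g j 1 1 * ∏ i ∈ Finset.univ.erase j, g i 0 0
          = g j 0 0 * ∏ i ∈ Finset.univ.erase j, g i 0 0 := by
        rw [hEj j, h1]
      exact mul_right_cancel₀ hPne h2
    intro φ
    funext x
    rw [hdiag]
    have hfac : ∀ i, g i (x i) (x i) = g i 1 1 := by
      intro i
      rcases LTrivAux.two_cases (x i) with h | h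
      · rw [h]; exact (haj_eq i).symm
      · rw [h]
    rw [Finset.prod_congr rfl (fun i _ => hfac i), hD, one_mul]
  · -- some d j = 0 : contradiction
    exfalso
    push_neg at hd
    obtain ⟨j, hdj⟩ := hd
    have hbcj : g j 0 1 * g j 1 0 = -1 := by
      have h := hdet' j
      rw [hdj] at h
      linear_combination -h
    have hcj : g j 1 0 ≠ 0 := by
      intro h0
      rw [h0, mul_zero] at hbcj
      exact zero_ne_one (by linear_combination -hbcj : (0:ℂ) = 1)
    obtain ⟨l₀, hl₀, -, -⟩ := LTrivAux.exists_ne3 hn j j j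
    have h2 := LTrivAux.R2 hn g hdet' hfix0 (Ne.symm hl₀)
    rw [hdj, zero_mul] at h2
    obtain ⟨u, humem, hau⟩ := (Finset.prod_eq_zero_iff).mp h2.symm
    have hu1 := (Finset.mem_erase.mp humem).1
    have hu2 := (Finset.mem_erase.mp (Finset.mem_erase.mp humem).2).1
    have h3 := LTrivAux.R2 hn g hdet' hfix0 (Ne.symm hu2)
    rw [hdj, zero_mul] at h3
    obtain ⟨w, hwmem, haw⟩ := (Finset.prod_eq_zero_iff).mp h3.symm
    have hw1 := (Finset.mem_erase.mp hwmem).1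
    have hw2 := (Finset.mem_erase.mp (Finset.mem_erase.mp hwmem).2).1
    have hbu : g u 0 1 * g u 1 0 = -1 := by
      have h := hdet' u
      rw [hau] at h
      linear_combination -h
    have hbu_ne : g u 0 1 ≠ 0 := by
      intro h0
      rw [h0, zero_mul] at hbu
      exact zero_ne_one (by linear_combination -hbu : (0:ℂ) = 1)
    have hbw : g w 0 1 * g w 1 0 = -1 := by
      have h := hdet' w
      rw [haw] at h
      linear_combination -h
    have hcw_ne : g w 1 0 ≠ 0 := by
      intro h0
      rw [h0, mul_zero] at hbw
      exact zero_ne_one (by linear_combination -hbw : (0:ℂ) = 1)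
    have h4 := LTrivAux.R3 hn g hdet' hfix0 (Ne.symm hw2) (Ne.symm hu2) hw1
    rw [hdj, hau] at h4
    have h5 : g u 0 1 * (g j 1 0 * g w 1 0) = 0 := by linear_combination h4
    rcases mul_eq_zero.mp h5 with h' | h'
    · exact hbu_ne h'
    rcases mul_eq_zero.mp h' with h'' | h''
    · exact hcj h''
    · exact hcw_ne h''
end
end

section
/- For every n ≥ 2, the state |L_n⟩ is critical: for every position k ∈ {1,…,n} and every traceless complex 2×2 matrix X, ⟨L_n, (I⊗⋯⊗X⊗⋯⊗I)L_n⟩ = 0, where X is placed at tensor slot k and the identity acts on all other slots. -/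
open scoped BigOperators Matrix
open MeasureTheory

noncomputable section

/-- The standard Hermitian inner product on `n`-qubit states. -/
def qInner {n : ℕ} (ψ φ : QubitState n) : ℂ := ∑ x, (starRingEnd ℂ) (ψ x) * φ x

namespace Laux

variable {n : ℕ}

def ones (n : ℕ) : Fin n → Fin 2 := fun _ => 1
def e (n : ℕ) (j : Fin n) : Fin n → Fin 2 := Function.update (fun _ => 0) j 1
def c (n : ℕ) : ℂ := ((Real.sqrt (2 * ((n : ℝ) - 1)))⁻¹ : ℂ)

lemma e_apply (j i : Fin n) : e n j i = if i = j then 1 else 0 := by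
  simp [e, Function.update_apply]

lemma e_self (j : Fin n) : e n j j = 1 := by simp [e_apply]

lemma e_ne (j i : Fin n) (h : i ≠ j) : e n j i = 0 := by simp [e_apply, h]

lemma ones_ne_e (hn : 2 ≤ n) (j : Fin n) : ones n ≠ e n j := by
  haveI : Nontrivial (Fin n) := by rw [Fin.nontrivial_iff_two_le]; exact hn
  obtain ⟨i, hi⟩ := exists_ne j
  intro h
  have h2 := congrFun h i
  rw [e_ne j i hi] at h2
  exact absurd h2 (by simp [ones])

lemma e_injective : Function.Injective (e n) := by
  intro j j' h
  by_contra hne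
  have h2 := congrFun h j
  rw [e_self, e_ne j' j hne] at h2
  exact absurd h2 (by decide)

lemma Lstate_ones (hn : 2 ≤ n) :
    Lstate n (ones n) = c n * (Real.sqrt ((n:ℝ) - 2) : ℂ) := by
  have h1 : ∀ i : Fin n, ones n i = 1 := fun _ => rfl
  have h2 : ¬ ∃ k : Fin n, ones n = Function.update (fun _ => (0:Fin 2)) k 1 := by
    rintro ⟨k, hk⟩; exact ones_ne_e hn k hk
  simp [Lstate, Wstate, c, h1, h2]

lemma Lstate_e (hn : 2 ≤ n) (j : Fin n) : Lstate n (e n j) = c n := by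
  haveI : Nontrivial (Fin n) := by rw [Fin.nontrivial_iff_two_le]; exact hn
  obtain ⟨i, hi⟩ := exists_ne j
  have h1 : ¬ ∀ i : Fin n, e n j i = 1 := by
    intro h
    have h2 := h i
    rw [e_ne j i hi] at h2
    exact absurd h2 (by decide)
  have h2 : ∃ k : Fin n, e n j = Function.update (fun _ => (0:Fin 2)) k 1 := ⟨j, rfl⟩
  have hs : ((Real.sqrt (n:ℝ)) : ℂ) ≠ 0 := by
    simp only [ne_eq, Complex.ofReal_eq_zero]
    positivity
  simp only [Lstate, Wstate, c, h1, h2, if_true, if_false, if_neg h1, if_pos h2, mul_zero,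
    zero_add, mul_one]
  rw [mul_inv_cancel₀ hs, mul_one]

lemma Lstate_zero (x : Fin n → Fin 2) (h1 : x ≠ ones n) (h2 : ∀ j, x ≠ e n j) :
    Lstate n x = 0 := by
  have h1' : ¬ ∀ i, x i = 1 := fun h => h1 (funext h)
  have h2' : ¬ ∃ k : Fin n, x = Function.update (fun _ => (0:Fin 2)) k 1 := by
    rintro ⟨k, hk⟩; exact h2 k hk
  simp [Lstate, Wstate, h1', h2']

lemma Lstate_support {x : Fin n → Fin 2} (h : Lstate n x ≠ 0) :
    x = ones n ∨ ∃ j, x = e n j := by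
  by_contra hc
  push_neg at hc
  exact h (Lstate_zero x hc.1 hc.2)

lemma conj_Lstate (x : Fin n → Fin 2) : (starRingEnd ℂ) (Lstate n x) = Lstate n x := by
  have h : ∀ (p : Prop) (inst : Decidable p), (starRingEnd ℂ) (if p then (1:ℂ) else 0) = if p then 1 else 0 := by
    intro p inst; split_ifs <;> simp
  simp only [Lstate, Wstate, map_mul, map_add, map_inv₀, Complex.conj_ofReal, h]

end Laux

/-- For every `n ≥ 2`, the state `|L_n⟩` is critical: for every slot `k` and every
traceless `2×2` matrix `X`, `⟨L_n, (I ⊗ ⋯ ⊗ X ⊗ ⋯ ⊗ I) L_n⟩ = 0`. -/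


theorem Lstate_isCritical (n : ℕ) (hn : 2 ≤ n) :
    ∀ (k : Fin n) (X : Matrix (Fin 2) (Fin 2) ℂ), X.trace = 0 →
      qInner (Lstate n)
        (prodOp (Function.update (fun _ => (1 : Matrix (Fin 2) (Fin 2) ℂ)) k X)
          (Lstate n)) = 0 := by
  intro k X hX
  classical
  have hdelta : ∀ x y : Fin n → Fin 2,
      (∏ i, (Function.update (fun _ => (1 : Matrix (Fin 2) (Fin 2) ℂ)) k X) i (x i) (y i))
        = X (x k) (y k) * (if ∀ i ∈ Finset.univ.erase k, x i = y i then 1 else 0) := by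
    intro x y
    rw [← Finset.mul_prod_erase Finset.univ _ (Finset.mem_univ k)]
    simp only [Function.update_self]
    congr 1
    calc ∏ i ∈ Finset.univ.erase k,
          (Function.update (fun _ => (1 : Matrix (Fin 2) (Fin 2) ℂ)) k X) i (x i) (y i)
        = ∏ i ∈ Finset.univ.erase k, (if x i = y i then (1:ℂ) else 0) := by
          refine Finset.prod_congr rfl fun i hi => ?_
          rw [Function.update_of_ne (Finset.ne_of_mem_erase hi)]
          simp [Matrix.one_apply]
      _ = _ := by simp [Finset.prod_boole]
  have step1 : qInner (Lstate n)
        (prodOp (Function.update (fun _ => (1 : Matrix (Fin 2) (Fin 2) ℂ)) k X) (Lstate n))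
      = ∑ x : Fin n → Fin 2, ∑ y : Fin n → Fin 2,
          (starRingEnd ℂ) (Lstate n x) *
            (X (x k) (y k) * (if ∀ i ∈ Finset.univ.erase k, x i = y i then 1 else 0)
              * Lstate n y) := by
    rw [qInner]
    refine Finset.sum_congr rfl fun x _ => ?_
    rw [prodOp, Finset.mul_sum]
    refine Finset.sum_congr rfl fun y _ => ?_
    rw [hdelta]
  rw [step1]
  have offdiag : ∀ x y : Fin n → Fin 2, y ≠ x →
      (starRingEnd ℂ) (Lstate n x) *
        (X (x k) (y k) * (if ∀ i ∈ Finset.univ.erase k, x i = y i then 1 else 0)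
          * Lstate n y) = 0 := by
    intro x y hxy
    by_cases hcond : ∀ i ∈ Finset.univ.erase k, x i = y i
    swap
    · rw [if_neg hcond]
      ring
    rw [if_pos hcond]
    by_cases hx : Lstate n x = 0
    · simp [hx]
    by_cases hy : Lstate n y = 0
    · simp [hy]
    exfalso
    have hagree : ∀ i : Fin n, i ≠ k → x i = y i := fun i hi =>
      hcond i (Finset.mem_erase.2 ⟨hi, Finset.mem_univ i⟩)
    have hfind : ∀ a b : Fin n, ¬ ((Finset.univ : Finset (Fin n)) ⊆ {a, b}) ∨ n ≤ 2 := by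
      intro a b
      by_cases h3 : n ≤ 2
      · exact Or.inr h3
      left
      intro hs
      have h1 := Finset.card_le_card hs
      have h2 := Finset.card_insert_le a ({b} : Finset (Fin n))
      simp [Finset.card_univ] at h1 h2
      omega
    have hones2 : n = 2 → Lstate n (Laux.ones n) = 0 := by
      intro h2
      rw [Laux.Lstate_ones hn]
      have hz : ((n:ℝ) - 2) = 0 := by rw [h2]; norm_num
      rw [hz, Real.sqrt_zero]
      simp
    have hcross : ∀ (j' : Fin n), (∀ i : Fin n, i ≠ k → Laux.ones n i = Laux.e n j' i) → n = 2 := by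
      intro j' hag
      rcases hfind k j' with hns | hle
      · exfalso
        obtain ⟨i, -, hi⟩ := Finset.not_subset.1 hns
        simp only [Finset.mem_insert, Finset.mem_singleton, not_or] at hi
        have h4 := hag i hi.1
        rw [Laux.e_ne j' i hi.2] at h4
        exact absurd h4 (by simp [Laux.ones])
      · omega
    rcases Laux.Lstate_support hx with hxo | ⟨j, hxj⟩ <;>
      rcases Laux.Lstate_support hy with hyo | ⟨j', hyj⟩
    · exact hxy (hyo.trans hxo.symm)
    · have h2 := hcross j' (fun i hi => by rw [← hxo, ← hyj]; exact hagree i hi)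
      exact hx (hxo ▸ hones2 h2)
    · have h2 := hcross j (fun i hi => by rw [← hyo, ← hxj]; exact (hagree i hi).symm)
      exact hy (hyo ▸ hones2 h2)
    · have hjj : j ≠ j' := by
        rintro rfl
        exact hxy (hyj.trans hxj.symm)
      by_cases hjk : j = k
      · subst hjk
        have h4 : Laux.e n j j' = Laux.e n j' j' := by
          rw [← hxj, ← hyj]; exact hagree j' (Ne.symm hjj)
        rw [Laux.e_ne j j' (Ne.symm hjj), Laux.e_self] at h4
        exact absurd h4 (by decide)
      · have h4 : Laux.e n j j = Laux.e n j' j := by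
          rw [← hxj, ← hyj]; exact hagree j hjk
        rw [Laux.e_self, Laux.e_ne j' j hjj] at h4
        exact absurd h4 (by decide)
  have step2 : ∀ x : Fin n → Fin 2,
      (∑ y : Fin n → Fin 2,
          (starRingEnd ℂ) (Lstate n x) *
            (X (x k) (y k) * (if ∀ i ∈ Finset.univ.erase k, x i = y i then 1 else 0)
              * Lstate n y))
        = Lstate n x * (X (x k) (x k) * Lstate n x) := by
    intro x
    rw [Finset.sum_eq_single x (fun y _ hy => offdiag x y hy)
      (fun h => absurd (Finset.mem_univ x) h)]
    rw [if_pos (fun i _ => rfl), Laux.conj_Lstate]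
    ring
  simp only [step2]
  set T : Finset (Fin n → Fin 2) :=
    insert (Laux.ones n) (Finset.image (Laux.e n) Finset.univ) with hT
  have hzero : ∀ x ∈ (Finset.univ : Finset (Fin n → Fin 2)), x ∉ T →
      Lstate n x * (X (x k) (x k) * Lstate n x) = 0 := by
    intro x _ hx
    simp only [hT, Finset.mem_insert, Finset.mem_image, Finset.mem_univ, true_and,
      not_or, not_exists] at hx
    rw [Laux.Lstate_zero x hx.1 (fun j h => hx.2 j h.symm)]
    ring
  rw [← Finset.sum_subset (Finset.subset_univ T) hzero]
  have hnotmem : Laux.ones n ∉ Finset.image (Laux.e n) Finset.univ := by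
    simp only [Finset.mem_image, Finset.mem_univ, true_and, not_exists]
    exact fun j h => Laux.ones_ne_e hn j h.symm
  rw [hT, Finset.sum_insert hnotmem,
    Finset.sum_image (fun a _ b _ h => Laux.e_injective h)]
  have hsum : ∑ j : Fin n,
      Lstate n (Laux.e n j) * (X (Laux.e n j k) (Laux.e n j k) * Lstate n (Laux.e n j))
      = (Laux.c n) * (Laux.c n) * (X 1 1 + ((n:ℂ) - 1) * X 0 0) := by
    simp only [Laux.Lstate_e hn]
    rw [← Finset.add_sum_erase Finset.univ _ (Finset.mem_univ k), Laux.e_self]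
    have hrw : ∀ j ∈ Finset.univ.erase k,
        Laux.c n * (X (Laux.e n j k) (Laux.e n j k) * Laux.c n)
          = Laux.c n * (X 0 0 * Laux.c n) := by
      intro j hj
      rw [Laux.e_ne j k (Ne.symm (Finset.ne_of_mem_erase hj))]
    rw [Finset.sum_congr rfl hrw, Finset.sum_const,
      Finset.card_erase_of_mem (Finset.mem_univ k), Finset.card_univ, Fintype.card_fin]
    have hcast : ((n - 1 : ℕ) : ℂ) = (n : ℂ) - 1 := by
      push_cast [Nat.cast_sub (by omega : 1 ≤ n)]
      ring
    rw [nsmul_eq_mul, hcast]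
    ring
  rw [hsum, Laux.Lstate_ones hn]
  have htr : X 0 0 + X 1 1 = 0 := by
    simpa [Matrix.trace, Matrix.diag, Fin.sum_univ_two] using hX
  have hsq : ((Real.sqrt ((n:ℝ) - 2)) : ℂ) * ((Real.sqrt ((n:ℝ) - 2)) : ℂ) = (n:ℂ) - 2 := by
    rw [← Complex.ofReal_mul, Real.mul_self_sqrt (by
      have : (2:ℝ) ≤ (n:ℝ) := by exact_mod_cast hn
      linarith)]
    push_cast
    ring
  have hok : X (Laux.ones n k) (Laux.ones n k) = X 1 1 := rfl
  rw [hok]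
  linear_combination (Laux.c n * Laux.c n * X 1 1) * hsq
    + (Laux.c n * Laux.c n * ((n:ℂ) - 1)) * htr
end
end

section
/- Let n be even and let ψ ∈ H_n satisfy f₂(ψ) ≠ 0. If the only product operator g = g₁⊗⋯⊗gₙ with det gᵢ = 1 for all i satisfying gψ = ψ is the identity, then the only product operator g̃ = g̃₁⊗⋯⊗g̃ₙ with all g̃ᵢ invertible satisfying g̃ψ = ψ is also the identity. -/
open scoped BigOperators Matrix
open MeasureTheory

noncomputable section

/-- The Pauli-y matrix `σ_y = [[0, -i], [i, 0]]`. -/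
def pauliY : Matrix (Fin 2) (Fin 2) ℂ := !![0, -Complex.I; Complex.I, 0]

/-- The degree-2 SL-invariant polynomial `f₂(ψ) = ⟨ψ̄, σ_y^{⊗n} ψ⟩`. -/
def f2 {n : ℕ} (ψ : QubitState n) : ℂ := ∑ x, ψ x * prodOp (fun _ => pauliY) ψ x

lemma prodOp_comp {n : ℕ} (a b : Fin n → Matrix (Fin 2) (Fin 2) ℂ) (ψ : QubitState n) :
    prodOp a (prodOp b ψ) = prodOp (fun i => a i * b i) ψ := by
  funext x
  simp only [prodOp, Finset.mul_sum, Finset.sum_mul]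
  rw [Finset.sum_comm]
  refine Finset.sum_congr rfl fun z _ => ?_
  have : (∏ i, (a i * b i) (x i) (z i)) = ∑ y : Fin n → Fin 2, ∏ i, a i (x i) (y i) * b i (y i) (z i) := by
    simp only [Matrix.mul_apply]
    rw [Finset.prod_univ_sum]
    rfl
  rw [this, Finset.sum_mul]
  refine Finset.sum_congr rfl fun y _ => ?_
  rw [Finset.prod_mul_distrib]
  ring

lemma prodOp_smul {n : ℕ} (c : Fin n → ℂ) (g : Fin n → Matrix (Fin 2) (Fin 2) ℂ)
    (ψ : QubitState n) (x) :
    prodOp (fun i => c i • g i) ψ x = (∏ i, c i) * prodOp g ψ x := by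
  simp only [prodOp, Finset.mul_sum]
  refine Finset.sum_congr rfl fun y _ => ?_
  simp [Matrix.smul_apply, Finset.prod_mul_distrib, smul_eq_mul]
  ring


lemma transpose_mul_pauliY_mul (g : Matrix (Fin 2) (Fin 2) ℂ) :
    gᵀ * pauliY * g = g.det • pauliY := by
  ext i j
  fin_cases i <;> fin_cases j <;>
    simp [Matrix.mul_apply, pauliY, Fin.sum_univ_two, Matrix.det_fin_two, Matrix.transpose_apply] <;>
    ring

lemma pairing {n : ℕ} (a b : Fin n → Matrix (Fin 2) (Fin 2) ℂ) (φ ψ : QubitState n) :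
    ∑ x, prodOp a φ x * prodOp b ψ x
      = ∑ u : Fin n → Fin 2, ∑ v : Fin n → Fin 2,
          (∏ i, ((a i)ᵀ * b i) (u i) (v i)) * (φ u * ψ v) := by
  have key : ∀ u v : Fin n → Fin 2,
      (∏ i, ((a i)ᵀ * b i) (u i) (v i))
      = ∑ x : Fin n → Fin 2, ∏ i, (a i)ᵀ (u i) (x i) * b i (x i) (v i) := by
    intro u v
    simp only [Matrix.mul_apply]
    rw [Finset.prod_univ_sum]
    rfl
  calc ∑ x, prodOp a φ x * prodOp b ψ x
      = ∑ x : Fin n → Fin 2, ∑ v : Fin n → Fin 2, ∑ u : Fin n → Fin 2,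
          ((∏ i, a i (x i) (u i)) * (∏ i, b i (x i) (v i))) * (φ u * ψ v) := by
        simp only [prodOp, Finset.sum_mul, Finset.mul_sum]
        refine Finset.sum_congr rfl fun x _ => Finset.sum_congr rfl fun v _ =>
          Finset.sum_congr rfl fun u _ => by ring
    _ = ∑ v : Fin n → Fin 2, ∑ u : Fin n → Fin 2, ∑ x : Fin n → Fin 2,
          ((∏ i, a i (x i) (u i)) * (∏ i, b i (x i) (v i))) * (φ u * ψ v) := by
        rw [Finset.sum_comm]
        exact Finset.sum_congr rfl fun v _ => Finset.sum_comm
    _ = ∑ u : Fin n → Fin 2, ∑ v : Fin n → Fin 2, ∑ x : Fin n → Fin 2,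
          ((∏ i, a i (x i) (u i)) * (∏ i, b i (x i) (v i))) * (φ u * ψ v) :=
        Finset.sum_comm
    _ = ∑ u : Fin n → Fin 2, ∑ v : Fin n → Fin 2,
          (∏ i, ((a i)ᵀ * b i) (u i) (v i)) * (φ u * ψ v) := by
        refine Finset.sum_congr rfl fun u _ => Finset.sum_congr rfl fun v _ => ?_
        rw [key, Finset.sum_mul]
        refine Finset.sum_congr rfl fun x _ => ?_
        simp only [Matrix.transpose_apply, Finset.prod_mul_distrib]

lemma f2_prodOp {n : ℕ} (g : Fin n → Matrix (Fin 2) (Fin 2) ℂ) (ψ : QubitState n) :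
    f2 (prodOp g ψ) = (∏ i, (g i).det) * f2 ψ := by
  have h1 : prodOp (fun _ => pauliY) (prodOp g ψ) = prodOp (fun i => pauliY * g i) ψ :=
    prodOp_comp _ _ _
  have h2 : ∀ i, (g i)ᵀ * (pauliY * g i) = (g i).det • pauliY := by
    intro i; rw [← Matrix.mul_assoc]; exact transpose_mul_pauliY_mul (g i)
  unfold f2
  rw [h1, pairing g (fun i => pauliY * g i) ψ ψ]
  simp only [h2, Matrix.smul_apply, smul_eq_mul, Finset.prod_mul_distrib, prodOp,
    Finset.mul_sum]
  refine Finset.sum_congr rfl fun u _ => Finset.sum_congr rfl fun v _ => by ring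

/-- For even `n` and `ψ` with `f₂(ψ) ≠ 0`: if the only product operator with all
determinants `1` fixing `ψ` is the identity operator, then the only product operator with
invertible factors fixing `ψ` is also the identity operator. -/
theorem trivial_SL_stabilizer_implies_trivial_GL_stabilizer (n : ℕ) (hn : Even n)
    (ψ : QubitState n) (hf : f2 ψ ≠ 0)
    (hSL : ∀ g : Fin n → Matrix (Fin 2) (Fin 2) ℂ, (∀ i, (g i).det = 1) →
      prodOp g ψ = ψ → ∀ φ : QubitState n, prodOp g φ = φ) :
    ∀ g : Fin n → Matrix (Fin 2) (Fin 2) ℂ, (∀ i, IsUnit (g i)) →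
      prodOp g ψ = ψ → ∀ φ : QubitState n, prodOp g φ = φ := by
  intro g hg hgψ
  have hdet : ∀ i, (g i).det ≠ 0 := fun i =>
    ((Matrix.isUnit_iff_isUnit_det (g i)).mp (hg i)).ne_zero
  -- the product of determinants is 1
  have hprod : (∏ i, (g i).det) = 1 := by
    have h := f2_prodOp g ψ
    rw [hgψ] at h
    have : (1 : ℂ) * f2 ψ = (∏ i, (g i).det) * f2 ψ := by rw [one_mul, ← h]
    exact (mul_right_cancel₀ hf this).symm
  -- choose square roots of the determinants whose product is 1
  obtain ⟨c, hc2, hc1⟩ : ∃ c : Fin n → ℂ, (∀ i, c i ^ 2 = (g i).det) ∧ ∏ i, c i = 1 := by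
    choose d hd using fun i => IsAlgClosed.exists_pow_nat_eq ((g i).det) (n := 2) (by norm_num)
    have hs : (∏ i, d i) ^ 2 = 1 := by
      rw [← Finset.prod_pow]
      simp only [hd]
      exact hprod
    have hs' : (∏ i, d i) = 1 ∨ (∏ i, d i) = -1 := by
      have h0 : ((∏ i, d i) - 1) * ((∏ i, d i) + 1) = 0 := by linear_combination hs
      rcases mul_eq_zero.mp h0 with h | h
      · left; linear_combination h
      · right; linear_combination h
    rcases hs' with h | h
    · exact ⟨d, hd, h⟩
    · have hne : n ≠ 0 := by
        rintro rfl
        simp only [Finset.univ_eq_empty, Finset.prod_empty] at h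
        norm_num at h
      obtain ⟨i₀⟩ : Nonempty (Fin n) := Fin.pos_iff_nonempty.mp (Nat.pos_of_ne_zero hne)
      refine ⟨Function.update d i₀ (-d i₀), ?_, ?_⟩
      · intro i
        rcases eq_or_ne i i₀ with rfl | hi
        · simp [Function.update_self, neg_sq, hd]
        · simp [Function.update_of_ne hi, hd]
      · rw [Finset.prod_update_of_mem (Finset.mem_univ i₀)]
        have h2 := Finset.prod_eq_mul_prod_sdiff_singleton_of_mem (Finset.mem_univ i₀) d
        rw [h] at h2
        linear_combination h2
  have hc0 : ∀ i, c i ≠ 0 := by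
    intro i h
    exact hdet i (by rw [← hc2 i, h]; ring)
  set g' : Fin n → Matrix (Fin 2) (Fin 2) ℂ := fun i => (c i)⁻¹ • g i with hg'
  have hdet' : ∀ i, (g' i).det = 1 := by
    intro i
    simp only [hg', Matrix.det_smul, Fintype.card_fin]
    rw [inv_pow, hc2 i, inv_mul_cancel₀ (hdet i)]
  have hfixψ : prodOp g' ψ = ψ := by
    funext x
    rw [hg']
    rw [prodOp_smul (fun i => (c i)⁻¹) g ψ x]
    rw [Finset.prod_inv_distrib, hc1, inv_one, one_mul, hgψ]
  have hfix := hSL g' hdet' hfixψ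
  intro φ
  funext x
  have hgi : ∀ i, c i • g' i = g i := by
    intro i
    rw [hg', smul_smul, mul_inv_cancel₀ (hc0 i), one_smul]
  calc prodOp g φ x = prodOp (fun i => c i • g' i) φ x := by
        simp only [hgi]
    _ = (∏ i, c i) * prodOp g' φ x := prodOp_smul c g' φ x
    _ = φ x := by rw [hc1, one_mul, hfix φ]
end
end

section
/- Let ψ ∈ H_n be a critical state and let g = g₁⊗⋯⊗gₙ be a product operator with all gᵢ invertible such that gψ = ψ. Then the adjoint also stabilizes ψ: g†ψ = ψ. -/
open scoped BigOperators Matrix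
open MeasureTheory

noncomputable section

/-- A state is critical if `⟨ψ, (I ⊗ ⋯ ⊗ X ⊗ ⋯ ⊗ I) ψ⟩ = 0` for every slot `k` and every
traceless `2×2` matrix `X` placed at slot `k`. -/
def IsCritical {n : ℕ} (ψ : QubitState n) : Prop :=
  ∀ (k : Fin n) (X : Matrix (Fin 2) (Fin 2) ℂ), X.trace = 0 →
    qInner ψ (prodOp (Function.update (fun _ => (1 : Matrix (Fin 2) (Fin 2) ℂ)) k X) ψ) = 0

/-! Diagonalize `(g i)ᴴ * g i = U i * diagonal (μ i) * (U i)ᴴ` and put `φ = U† ψ`,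
`W x = |φ x|²`, `P x = ∏ i, μ i (x i)`. From `g ψ = ψ` we get `∑ P W = ∑ W`, while criticality,
which local unitaries preserve, makes every one-site marginal of `W` uniform, so that
`∑ W log P = (C / 2) ∑ W` with `C = ∑ i, log |det (g i)|²`. Then `log t ≤ t - 1` forces `C ≤ 0`;
the same argument for `g⁻¹` gives `C ≥ 0`, and in the equality case `P = 1` on the support of `φ`,
i.e. `gᴴ g ψ = ψ`, hence `gᴴ ψ = gᴴ g ψ = ψ`. -/

open scoped ComplexOrder
open Matrix Function

section ProductOperators

variable {n : ℕ}

lemma prodOp_mul (g h : Fin n → Matrix (Fin 2) (Fin 2) ℂ) (ψ : QubitState n) :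
    prodOp g (prodOp h ψ) = prodOp (fun i => g i * h i) ψ := by
  funext x
  simp only [prodOp, mul_apply, Finset.mul_sum]
  rw [Finset.sum_comm]
  refine Finset.sum_congr rfl fun z _ => ?_
  rw [Finset.prod_univ_sum]
  simp only [Fintype.piFinset_univ, Finset.sum_mul, Finset.prod_mul_distrib]
  exact Finset.sum_congr rfl fun y _ => by ring

lemma prodOp_diagonal (d : Fin n → Fin 2 → ℂ) (ψ : QubitState n) :
    prodOp (fun i => diagonal (d i)) ψ = fun x => (∏ i, d i (x i)) * ψ x := by
  funext x
  rw [prodOp, Finset.sum_eq_single x]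
  · simp [diagonal_apply_eq]
  · intro y _ hy
    obtain ⟨i, hi⟩ := Function.ne_iff.mp (Ne.symm hy)
    exact mul_eq_zero_of_left
      (Finset.prod_eq_zero (Finset.mem_univ i) (diagonal_apply_ne (d i) hi)) (ψ y)
  · simp

lemma prodOp_zero (g : Fin n → Matrix (Fin 2) (Fin 2) ℂ) : prodOp g (0 : QubitState n) = 0 := by
  funext x
  simp [prodOp]

lemma prodOp_one (ψ : QubitState n) : prodOp (fun _ => 1) ψ = ψ := by
  simpa [diagonal_one] using prodOp_diagonal (fun _ _ => 1) ψ

lemma prodOp_update_diagonal (k : Fin n) (d : Fin 2 → ℂ) (ψ : QubitState n) :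
    prodOp (update (fun _ => 1) k (diagonal d)) ψ = fun x => d (x k) * ψ x := by
  have hdiag : update (fun _ => (1 : Matrix (Fin 2) (Fin 2) ℂ)) k (diagonal d)
      = fun i => diagonal (update (fun _ _ => 1) k d i) := by
    funext i
    rw [apply_update (fun _ => diagonal)]
    simp [diagonal_one]
  rw [hdiag, prodOp_diagonal]
  funext x
  rw [Fintype.prod_eq_single k fun i hi => by simp [hi]]
  simp

lemma qInner_prodOp_left (g : Fin n → Matrix (Fin 2) (Fin 2) ℂ) (ψ φ : QubitState n) :
    qInner (prodOp g ψ) φ = qInner ψ (prodOp (fun i => (g i)ᴴ) φ) := by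
  simp only [qInner, prodOp, map_sum, map_mul, map_prod, Finset.mul_sum, Finset.sum_mul,
    conjTranspose_apply]
  rw [Finset.sum_comm]
  refine Finset.sum_congr rfl fun y _ => Finset.sum_congr rfl fun x _ => ?_
  simp only [Complex.star_def]
  ring

lemma qInner_mul_apply (c : QubitState n) (φ : QubitState n) :
    qInner φ (fun x => c x * φ x) = ∑ x, c x * Complex.normSq (φ x) := by
  refine Finset.sum_congr rfl fun x _ => ?_
  rw [Complex.normSq_eq_conj_mul_self]
  ring

end ProductOperators

section Unitary

variable {n : ℕ} {U : Fin n → Matrix (Fin 2) (Fin 2) ℂ}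

lemma prodOp_conjTranspose_prodOp_of_unitary (hU : ∀ i, U i ∈ unitaryGroup (Fin 2) ℂ)
    (ψ : QubitState n) : prodOp (fun i => (U i)ᴴ) (prodOp U ψ) = ψ := by
  simp_rw [prodOp_mul, ← star_eq_conjTranspose, Unitary.star_mul_self_of_mem (hU _)]
  exact prodOp_one ψ

lemma prodOp_prodOp_conjTranspose_of_unitary (hU : ∀ i, U i ∈ unitaryGroup (Fin 2) ℂ)
    (ψ : QubitState n) : prodOp U (prodOp (fun i => (U i)ᴴ) ψ) = ψ := by
  simp_rw [prodOp_mul, ← star_eq_conjTranspose, Unitary.mul_star_self_of_mem (hU _)]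
  exact prodOp_one ψ

lemma qInner_prodOp_of_unitary (hU : ∀ i, U i ∈ unitaryGroup (Fin 2) ℂ) (ψ φ : QubitState n) :
    qInner (prodOp U ψ) (prodOp U φ) = qInner ψ φ := by
  rw [qInner_prodOp_left, prodOp_conjTranspose_prodOp_of_unitary hU]

lemma IsCritical.prodOp_of_unitary {ψ : QubitState n} (hψ : IsCritical ψ)
    (hU : ∀ i, U i ∈ unitaryGroup (Fin 2) ℂ) : IsCritical (prodOp U ψ) := by
  intro k X hX
  have hconj : (fun i => (U i)ᴴ * update (fun _ => (1 : Matrix (Fin 2) (Fin 2) ℂ)) k X i * U i)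
      = update (fun _ => 1) k ((U k)ᴴ * X * U k) := by
    funext i
    rcases eq_or_ne i k with rfl | hi
    · simp
    · simp [hi, ← star_eq_conjTranspose, Unitary.star_mul_self_of_mem (hU i)]
  rw [qInner_prodOp_left, prodOp_mul, prodOp_mul, hconj]
  refine hψ k _ ?_
  rw [trace_mul_cycle, ← star_eq_conjTranspose, Unitary.mul_star_self_of_mem (hU k), one_mul, hX]

end Unitary

lemma sum_mul_log_le_sum_mul_sub_one {ι : Type*} [Fintype ι] {w p : ι → ℝ}
    (hw : ∀ i, 0 ≤ w i) (hp : ∀ i, 0 < p i) :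
    ∑ i, w i * Real.log (p i) ≤ ∑ i, w i * (p i - 1) :=
  Finset.sum_le_sum fun i _ => mul_le_mul_of_nonneg_left (Real.log_le_sub_one_of_pos (hp i)) (hw i)

lemma eq_one_of_sum_mul_log_eq_sum_mul_sub_one {ι : Type*} [Fintype ι] {w p : ι → ℝ}
    (hw : ∀ i, 0 ≤ w i) (hp : ∀ i, 0 < p i)
    (h : ∑ i, w i * Real.log (p i) = ∑ i, w i * (p i - 1)) {i : ι} (hi : w i ≠ 0) : p i = 1 := by
  have hterm := (Finset.sum_eq_sum_iff_of_le fun i _ =>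
    mul_le_mul_of_nonneg_left (Real.log_le_sub_one_of_pos (hp i)) (hw i)).mp h i (Finset.mem_univ i)
  by_contra hne
  exact (Real.log_lt_sub_one_of_pos (hp i) hne).ne (mul_left_cancel₀ hi hterm)

section Critical

variable {n : ℕ}

lemma IsCritical.sum_mul_normSq {φ : QubitState n} (hφ : IsCritical φ) (k : Fin n)
    (f : Fin 2 → ℝ) :
    ∑ x, f (x k) * Complex.normSq (φ x) = (∑ b, f b) / 2 * ∑ x, Complex.normSq (φ x) := by
  set m := (∑ b, f b) / 2
  have hsum : ∑ b, (f b - m) = 0 := by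
    simp only [Fin.sum_univ_two, m]
    ring
  have htr : (diagonal fun b => ((f b - m : ℝ) : ℂ)).trace = 0 := by
    rw [trace_diagonal, ← Complex.ofReal_sum, hsum, Complex.ofReal_zero]
  have h := hφ k _ htr
  rw [prodOp_update_diagonal, qInner_mul_apply] at h
  have h' : ∑ x, (f (x k) - m) * Complex.normSq (φ x) = 0 := by exact_mod_cast h
  simp only [sub_mul, Finset.sum_sub_distrib, ← Finset.mul_sum] at h'
  linarith

theorem IsCritical.sum_log_diagonal_nonpos {φ : QubitState n} (hφ : IsCritical φ) (hφ0 : φ ≠ 0)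
    {μ : Fin n → Fin 2 → ℝ} (hμ : ∀ i b, 0 < μ i b)
    (hnorm : ∑ x, (∏ i, μ i (x i)) * Complex.normSq (φ x) = ∑ x, Complex.normSq (φ x)) :
    ∑ i, ∑ b, Real.log (μ i b) ≤ 0 ∧
      (∑ i, ∑ b, Real.log (μ i b) = 0 → ∀ x, φ x ≠ 0 → ∏ i, μ i (x i) = 1) := by
  set W : (Fin n → Fin 2) → ℝ := fun x => Complex.normSq (φ x)
  set P : (Fin n → Fin 2) → ℝ := fun x => ∏ i, μ i (x i)
  set C := ∑ i, ∑ b, Real.log (μ i b)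
  have hW : ∀ x, 0 ≤ W x := fun x => Complex.normSq_nonneg _
  have hP : ∀ x, 0 < P x := fun x => Finset.prod_pos fun i _ => hμ i (x i)
  have hW_sum : 0 < ∑ x, W x := by
    obtain ⟨x, hx⟩ := Function.ne_iff.mp hφ0
    exact Finset.sum_pos' (fun x _ => hW x) ⟨x, Finset.mem_univ x, Complex.normSq_pos.mpr hx⟩
  have hlog : ∑ x, W x * Real.log (P x) = C / 2 * ∑ x, W x :=
    calc ∑ x, W x * Real.log (P x) = ∑ x, ∑ i, Real.log (μ i (x i)) * W x := by
          refine Finset.sum_congr rfl fun x _ => ?_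
          rw [Real.log_prod fun i _ => (hμ i (x i)).ne', mul_comm, Finset.sum_mul]
      _ = ∑ i, ∑ x, Real.log (μ i (x i)) * W x := Finset.sum_comm
      _ = ∑ i, (∑ b, Real.log (μ i b)) / 2 * ∑ x, W x :=
          Finset.sum_congr rfl fun i _ => hφ.sum_mul_normSq i fun b => Real.log (μ i b)
      _ = C / 2 * ∑ x, W x := by rw [← Finset.sum_mul, ← Finset.sum_div]
  have hsub : ∑ x, W x * (P x - 1) = 0 := by
    simp only [mul_sub, mul_one, Finset.sum_sub_distrib]
    rw [sub_eq_zero, ← hnorm]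
    exact Finset.sum_congr rfl fun x _ => mul_comm _ _
  have hle := sum_mul_log_le_sum_mul_sub_one hW hP
  rw [hlog, hsub] at hle
  refine ⟨by nlinarith, fun hC x hx => ?_⟩
  refine eq_one_of_sum_mul_log_eq_sum_mul_sub_one hW hP ?_ (Complex.normSq_pos.mpr hx).ne'
  rw [hlog, hsub, hC, zero_div, zero_mul]

theorem IsCritical.sum_log_det_nonpos {ψ : QubitState n} (hψ : IsCritical ψ) (hψ0 : ψ ≠ 0)
    {h : Fin n → Matrix (Fin 2) (Fin 2) ℂ} (hh : ∀ i, (h i).PosDef)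
    (hnorm : qInner ψ (prodOp h ψ) = qInner ψ ψ) :
    ∑ i, Real.log (h i).det.re ≤ 0 ∧ (∑ i, Real.log (h i).det.re = 0 → prodOp h ψ = ψ) := by
  set U : Fin n → Matrix (Fin 2) (Fin 2) ℂ := fun i => (hh i).isHermitian.eigenvectorUnitary
  set μ : Fin n → Fin 2 → ℝ := fun i => (hh i).isHermitian.eigenvalues
  have hU : ∀ i, U i ∈ unitaryGroup (Fin 2) ℂ := fun i => (hh i).isHermitian.eigenvectorUnitary.2
  set φ := prodOp (fun i => (U i)ᴴ) ψ
  have hψφ : prodOp U φ = ψ := prodOp_prodOp_conjTranspose_of_unitary hU ψ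
  have hφ0 : φ ≠ 0 := fun hφ => hψ0 (by rw [← hψφ, hφ, prodOp_zero])
  have hhψ : prodOp h ψ = prodOp U (fun x => (∏ i, (μ i (x i) : ℂ)) * φ x) := by
    rw [← prodOp_diagonal (fun i b => (μ i b : ℂ)), prodOp_mul, prodOp_mul]
    congr 1
    funext i
    refine (hh i).isHermitian.spectral_theorem.trans ?_
    rw [Unitary.conjStarAlgAut_apply]
    rfl
  have hdet : ∀ i, Real.log (h i).det.re = ∑ b, Real.log (μ i b) := fun i => by
    rw [(hh i).isHermitian.det_eq_prod_eigenvalues,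
      ← Real.log_prod fun b _ => ((hh i).eigenvalues_pos b).ne']
    simp only [Complex.coe_algebraMap, ← Complex.ofReal_prod, Complex.ofReal_re]
  have hnorm' : ∑ x, (∏ i, μ i (x i)) * Complex.normSq (φ x) = ∑ x, Complex.normSq (φ x) := by
    rw [hhψ, ← hψφ, qInner_prodOp_of_unitary hU, qInner_prodOp_of_unitary hU,
      qInner_mul_apply] at hnorm
    have hφφ := qInner_mul_apply 1 φ
    simp only [Pi.one_apply, one_mul] at hφφ
    exact_mod_cast hnorm.trans hφφ
  have hφ : IsCritical φ := hψ.prodOp_of_unitary fun i => Unitary.star_mem (hU i)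
  obtain ⟨hle, heq⟩ := hφ.sum_log_diagonal_nonpos hφ0 (fun i b => (hh i).eigenvalues_pos b) hnorm'
  simp only [hdet]
  refine ⟨hle, fun hC => ?_⟩
  rw [hhψ]
  conv_rhs => rw [← hψφ]
  congr 1
  funext x
  by_cases hx : φ x = 0
  · rw [hx, mul_zero]
  · rw [show (∏ i, (μ i (x i) : ℂ)) = 1 by exact_mod_cast heq hC x hx, one_mul]

theorem IsCritical.sum_log_normSq_det_nonpos {ψ : QubitState n} (hψ : IsCritical ψ)
    (hψ0 : ψ ≠ 0) {g : Fin n → Matrix (Fin 2) (Fin 2) ℂ} (hg : ∀ i, IsUnit (g i))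
    (hfix : prodOp g ψ = ψ) :
    ∑ i, Real.log (Complex.normSq (g i).det) ≤ 0 ∧
      (∑ i, Real.log (Complex.normSq (g i).det) = 0 → prodOp (fun i => (g i)ᴴ) ψ = ψ) := by
  have hpos : ∀ i, ((g i)ᴴ * g i).PosDef := fun i =>
    PosDef.conjTranspose_mul_self _ (mulVec_injective_iff_isUnit.mpr (hg i))
  have hdet : ∀ i, ((g i)ᴴ * g i).det.re = Complex.normSq (g i).det := fun i => by
    rw [det_mul, det_conjTranspose, Complex.star_def, ← Complex.normSq_eq_conj_mul_self,
      Complex.ofReal_re]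
  have hnorm : qInner ψ (prodOp (fun i => (g i)ᴴ * g i) ψ) = qInner ψ ψ := by
    rw [← prodOp_mul, ← qInner_prodOp_left, hfix]
  obtain ⟨hle, heq⟩ := hψ.sum_log_det_nonpos hψ0 hpos hnorm
  simp only [hdet] at hle heq
  refine ⟨hle, fun hC => ?_⟩
  conv_lhs => rw [← hfix]
  rw [prodOp_mul]
  exact heq hC

end Critical

/-- If `ψ` is critical and the product operator `g = g₁ ⊗ ⋯ ⊗ gₙ` with all `gᵢ` invertible
fixes `ψ`, then its Hermitian adjoint `g† = g₁ᴴ ⊗ ⋯ ⊗ gₙᴴ` also fixes `ψ`. -/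
theorem critical_stabilizer_closed_under_adjoint (n : ℕ) (ψ : QubitState n)
    (hcrit : IsCritical ψ)
    (g : Fin n → Matrix (Fin 2) (Fin 2) ℂ) (hg : ∀ i, IsUnit (g i))
    (hfix : prodOp g ψ = ψ) :
    prodOp (fun i => (g i)ᴴ) ψ = ψ := by
  rcases eq_or_ne ψ 0 with rfl | hψ0
  · exact prodOp_zero _
  have hdet : ∀ i, IsUnit (g i).det := fun i => (isUnit_iff_isUnit_det _).mp (hg i)
  have hfix_inv : prodOp (fun i => (g i)⁻¹) ψ = ψ := by
    conv_lhs => rw [← hfix]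
    simp_rw [prodOp_mul, nonsing_inv_mul _ (hdet _)]
    exact prodOp_one ψ
  have hlog_inv : ∑ i, Real.log (Complex.normSq (g i)⁻¹.det)
      = -∑ i, Real.log (Complex.normSq (g i).det) := by
    simp only [det_nonsing_inv, Ring.inverse_eq_inv', map_inv₀, Real.log_inv,
      Finset.sum_neg_distrib]
  obtain ⟨hle, heq⟩ := hcrit.sum_log_normSq_det_nonpos hψ0 hg hfix
  obtain ⟨hle_inv, -⟩ := hcrit.sum_log_normSq_det_nonpos hψ0
    (fun i => isUnit_nonsing_inv_iff.mpr (hg i)) hfix_inv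
  exact heq (by linarith)
end
end

section
/- Let φ ∈ H_n be an n-way entangled state, let M = A₁⊗⋯⊗Aₙ be a product operator on H_n, and let ψ ∈ H_n and c ∈ ℂ with c ≠ 0 satisfy Mψ = cφ. Then every matrix Aᵢ (i = 1,…,n) is invertible. -/
open scoped BigOperators Matrix
open MeasureTheory

noncomputable section

/-- `φ` factorizes as `v ⊗ w` across slot `k`. -/
def ProductAtSlot {n : ℕ} (φ : QubitState n) (k : Fin n) : Prop :=
  ∃ (v : Fin 2 → ℂ) (w : ({i : Fin n // i ≠ k} → Fin 2) → ℂ),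
    ∀ x : Fin n → Fin 2, φ x = v (x k) * w (fun i => x i.1)

/-- `φ` is `n`-way entangled: it is not a product across any single slot. -/
def NWayEntangled {n : ℕ} (φ : QubitState n) : Prop := ∀ k : Fin n, ¬ ProductAtSlot φ k

/-- A singular 2×2 matrix is an outer product. -/
lemma rank_one_decomp (A : Matrix (Fin 2) (Fin 2) ℂ) (h : A.det = 0) :
    ∃ v u : Fin 2 → ℂ, ∀ a b, A a b = v a * u b := by
  by_cases h0 : A = 0
  · exact ⟨0, 0, by simp [h0]⟩
  · have hne : ∃ i j, A i j ≠ 0 := by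
      by_contra hcon
      push_neg at hcon
      exact h0 (by ext i j; simpa using hcon i j)
    obtain ⟨i, j, hij⟩ := hne
    refine ⟨fun a => A a j, fun b => A i b / A i j, fun a b => ?_⟩
    rw [Matrix.det_fin_two] at h
    field_simp
    fin_cases i <;> fin_cases j <;> fin_cases a <;> fin_cases b <;>
      simp only [Fin.mk_zero, Fin.mk_one] <;>
      first
        | linear_combination h
        | linear_combination -h
        | ring

/-- If `φ` is `n`-way entangled, `M = A₁ ⊗ ⋯ ⊗ Aₙ` is a product operator, and
`Mψ = cφ` with `c ≠ 0`, then every `Aᵢ` is invertible. -/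
theorem product_factors_invertible_of_entangled_image (n : ℕ) (φ : QubitState n)
    (hφ : NWayEntangled φ) (A : Fin n → Matrix (Fin 2) (Fin 2) ℂ) (ψ : QubitState n)
    (c : ℂ) (hc : c ≠ 0) (h : prodOp A ψ = c • φ) :
    ∀ i, IsUnit (A i) := by
  intro k
  by_contra hA
  apply hφ k
  have hdet : (A k).det = 0 := by
    by_contra hd
    exact hA ((Matrix.isUnit_iff_isUnit_det _).2 (isUnit_iff_ne_zero.2 hd))
  obtain ⟨v, u, hvu⟩ := rank_one_decomp (A k) hdet
  refine ⟨v, fun z => c⁻¹ * ∑ y : Fin n → Fin 2,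
      (u (y k) * ∏ i : {i : Fin n // i ≠ k}, A i.1 (z i) (y i.1)) * ψ y, fun x => ?_⟩
  have hφx : φ x = c⁻¹ * prodOp A ψ x := by
    rw [h]
    simp [Pi.smul_apply, smul_eq_mul]
    field_simp
  have key : ∀ y : Fin n → Fin 2, (∏ i, A i (x i) (y i)) =
      v (x k) * (u (y k) * ∏ i : {i : Fin n // i ≠ k}, A i.1 (x i.1) (y i.1)) := by
    intro y
    rw [Fintype.prod_eq_mul_prod_compl k (fun i => A i (x i) (y i)), hvu]
    rw [Finset.prod_subtype (p := fun i => i ≠ k) ({k}ᶜ : Finset (Fin n)) (fun i => by simp) 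
      (fun i => A i (x i) (y i))]
    ring
  rw [hφx, prodOp]
  simp_rw [key, mul_assoc]
  rw [← Finset.mul_sum]
  ring
end
end

section
/- Let g = g₁⊗⋯⊗gₙ be a product operator on H_n with all gᵢ invertible, and let ψ ∈ H_n be such that φ = gψ is normalized. Then there exist complex 2×2 matrices A₁,…,Aₙ with Aₖ†Aₖ ≤ I₂ (in the positive semidefinite order) for every k, such that (A₁⊗⋯⊗Aₙ)ψ = λ_max(g†g)^{−1/2} φ; in particular ‖(A₁⊗⋯⊗Aₙ)ψ‖² = 1/λ_max(g†g), so the conversion of ψ into φ succeeds by local measurements with probability 1/λ_max(g†g). -/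
/-!
Write `λ(M)` for `λ_max(M†M)`. Testing `λ(g₁ ⊗ ⋯ ⊗ gₙ)` on a tensor product of top singular
vectors of the factors gives `∏ λ(gᵢ) ≤ λ(g)`. Since `gψ ≠ 0`, no `gᵢ` vanishes, so the operators
`gᵢ / √λ(gᵢ)` are contractions; rescaling one of them by `√(∏ λ(gᵢ) / λ(g)) ≤ 1` keeps it a
contraction and makes the tensor product equal to `λ(g)^{-1/2} g`. For `n = 0`, `g` is the
identity of a one-dimensional space and `λ(g) = 1`.
-/

open scoped BigOperators Matrix
open MeasureTheory

noncomputable section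

/-- The squared Euclidean norm of an `n`-qubit state. -/
def qNormSq {n : ℕ} (ψ : QubitState n) : ℝ := ∑ x, Complex.normSq (ψ x)

/-- The matrix (in the computational basis) of the product operator `g₁ ⊗ ⋯ ⊗ gₙ`. -/
def prodMatrix {n : ℕ} (g : Fin n → Matrix (Fin 2) (Fin 2) ℂ) :
    Matrix (Fin n → Fin 2) (Fin n → Fin 2) ℂ :=
  Matrix.of fun x y => ∏ i, g i (x i) (y i)

/-- The largest eigenvalue `λ_max(A†A)` of the positive semidefinite matrix `A†A`,
characterized as the supremum of `‖Av‖²` over unit vectors `v`. -/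
def lambdaMaxGram {m : Type*} [Fintype m] (A : Matrix m m ℂ) : ℝ :=
  sSup {r : ℝ | ∃ v : m → ℂ, (∑ i, Complex.normSq (v i)) = 1 ∧
    r = ∑ i, Complex.normSq (A.mulVec v i)}

open Complex

section Gram

variable {m : Type*} [Fintype m]

lemma sum_normSq_nonneg (v : m → ℂ) : 0 ≤ ∑ i, normSq (v i) :=
  Finset.sum_nonneg fun _ _ => normSq_nonneg _

lemma sum_normSq_eq_zero_iff {v : m → ℂ} : ∑ i, normSq (v i) = 0 ↔ v = 0 := by
  simp [Finset.sum_eq_zero_iff_of_nonneg, normSq_nonneg, funext_iff]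

lemma sum_normSq_ofReal_smul (c : ℝ) (v : m → ℂ) :
    ∑ i, normSq (((c : ℂ) • v) i) = c ^ 2 * ∑ i, normSq (v i) := by
  simp [normSq_mul, normSq_ofReal, Finset.mul_sum, sq]

lemma isCompact_sum_normSq_eq_one : IsCompact {v : m → ℂ | ∑ i, normSq (v i) = 1} := by
  have hcont : Continuous fun v : m → ℂ => ∑ i, normSq (v i) := by fun_prop
  refine (isCompact_closedBall (0 : m → ℂ) 1).of_isClosed_subset
    (isClosed_singleton.preimage hcont) fun v hv => ?_
  rw [Metric.mem_closedBall, dist_zero_right, pi_norm_le_iff_of_nonneg zero_le_one]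
  intro i
  have hi : ‖v i‖ ^ 2 ≤ 1 := by
    rw [Complex.sq_norm, ← show ∑ j, normSq (v j) = 1 from hv]
    exact Finset.single_le_sum (fun j _ => normSq_nonneg (v j)) (Finset.mem_univ i)
  nlinarith [norm_nonneg (v i)]

lemma lambdaMaxGram_eq_sSup_image (A : Matrix m m ℂ) :
    lambdaMaxGram A = sSup ((fun v => ∑ i, normSq ((A *ᵥ v) i)) ''
      {v : m → ℂ | ∑ i, normSq (v i) = 1}) := by
  simp only [lambdaMaxGram, Set.image, Set.mem_ofPred_eq, eq_comm]

lemma le_lambdaMaxGram (A : Matrix m m ℂ) {v : m → ℂ} (hv : ∑ i, normSq (v i) = 1) :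
    ∑ i, normSq ((A *ᵥ v) i) ≤ lambdaMaxGram A := by
  rw [lambdaMaxGram_eq_sSup_image]
  exact le_csSup ((isCompact_sum_normSq_eq_one.image (by fun_prop)).bddAbove) ⟨v, hv, rfl⟩

lemma exists_sum_normSq_mulVec_eq_lambdaMaxGram [Nonempty m] (A : Matrix m m ℂ) :
    ∃ v : m → ℂ, ∑ i, normSq (v i) = 1 ∧ ∑ i, normSq ((A *ᵥ v) i) = lambdaMaxGram A := by
  classical
  have hne : {v : m → ℂ | ∑ i, normSq (v i) = 1}.Nonempty :=
    ⟨Pi.single (Classical.arbitrary m) 1, by simp [Pi.single_apply, apply_ite normSq]⟩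
  rw [lambdaMaxGram_eq_sSup_image]
  exact (isCompact_sum_normSq_eq_one.image (by fun_prop)).sSup_mem (hne.image _)

lemma lambdaMaxGram_nonneg (A : Matrix m m ℂ) : 0 ≤ lambdaMaxGram A :=
  Real.sSup_nonneg fun _ ⟨_, _, hr⟩ => hr ▸ sum_normSq_nonneg _

lemma sum_normSq_mulVec_le (A : Matrix m m ℂ) (v : m → ℂ) :
    ∑ i, normSq ((A *ᵥ v) i) ≤ lambdaMaxGram A * ∑ i, normSq (v i) := by
  rcases (sum_normSq_nonneg v).eq_or_lt with hs | hs
  · simp [sum_normSq_eq_zero_iff.mp hs.symm]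
  set s := ∑ i, normSq (v i)
  have hunit : ∑ i, normSq (((((√s)⁻¹ : ℝ) : ℂ) • v) i) = 1 := by
    rw [sum_normSq_ofReal_smul, inv_pow, Real.sq_sqrt hs.le, inv_mul_cancel₀ hs.ne']
  have hle := le_lambdaMaxGram A hunit
  rw [Matrix.mulVec_smul, sum_normSq_ofReal_smul, inv_pow, Real.sq_sqrt hs.le,
    inv_mul_le_iff₀ hs] at hle
  linarith

lemma lambdaMaxGram_pos {A : Matrix m m ℂ} (hA : A ≠ 0) : 0 < lambdaMaxGram A := by
  classical
  obtain ⟨j, hj⟩ : ∃ j, A *ᵥ Pi.single j 1 ≠ 0 := by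
    by_contra! h
    exact hA (Matrix.ext_of_mulVec_single fun j => by rw [h j, Matrix.zero_mulVec])
  have hunit : ∑ i, normSq ((Pi.single j 1 : m → ℂ) i) = 1 := by
    simp [Pi.single_apply, apply_ite normSq]
  exact ((sum_normSq_nonneg _).lt_of_ne (Ne.symm (sum_normSq_eq_zero_iff.not.mpr hj))).trans_le
    (le_lambdaMaxGram A hunit)

lemma lambdaMaxGram_one [DecidableEq m] [Nonempty m] : lambdaMaxGram (1 : Matrix m m ℂ) = 1 := by
  obtain ⟨v, hv, hmax⟩ := exists_sum_normSq_mulVec_eq_lambdaMaxGram (1 : Matrix m m ℂ)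
  rw [← hmax, Matrix.one_mulVec, hv]

lemma sum_normSq_ofReal_smul_mulVec_le {A : Matrix m m ℂ} {c : ℝ}
    (hc : c ^ 2 * lambdaMaxGram A ≤ 1) (v : m → ℂ) :
    ∑ i, normSq ((((c : ℂ) • A) *ᵥ v) i) ≤ ∑ i, normSq (v i) := by
  rw [Matrix.smul_mulVec, sum_normSq_ofReal_smul]
  calc c ^ 2 * ∑ i, normSq ((A *ᵥ v) i)
      ≤ c ^ 2 * (lambdaMaxGram A * ∑ i, normSq (v i)) :=
        mul_le_mul_of_nonneg_left (sum_normSq_mulVec_le A v) (sq_nonneg c)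
    _ = c ^ 2 * lambdaMaxGram A * ∑ i, normSq (v i) := by ring
    _ ≤ ∑ i, normSq (v i) := mul_le_of_le_one_left (sum_normSq_nonneg v) hc

end Gram

lemma sum_normSq_prod {ι κ : Type*} [Fintype ι] [DecidableEq ι] [Fintype κ] (v : ι → κ → ℂ) :
    ∑ x : ι → κ, normSq (∏ i, v i (x i)) = ∏ i, ∑ j, normSq (v i j) := by
  simp only [map_prod, Fintype.prod_sum]

lemma exists_sq_mul_le_one_and_prod_eq {ι : Type*} [Fintype ι] [Nonempty ι] {μ : ι → ℝ}
    (hμ : ∀ i, 0 < μ i) {L : ℝ} (hL : ∏ i, μ i ≤ L) :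
    ∃ c : ι → ℝ, (∀ i, c i ^ 2 * μ i ≤ 1) ∧ ∏ i, c i = (√L)⁻¹ := by
  classical
  set P := ∏ i, μ i with hP_def
  have hP : 0 < P := Finset.prod_pos fun i _ => hμ i
  have hPL : P / L ≤ 1 := (div_le_one (hP.trans_le hL)).mpr hL
  let i₀ := Classical.arbitrary ι
  refine ⟨fun i => (√(μ i))⁻¹ * if i = i₀ then √(P / L) else 1, fun i => ?_, ?_⟩
  · rw [mul_pow, inv_pow, Real.sq_sqrt (hμ i).le, mul_comm, ← mul_assoc,
      mul_inv_cancel₀ (hμ i).ne', one_mul]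
    split_ifs
    · rwa [Real.sq_sqrt (div_nonneg hP.le (hP.le.trans hL))]
    · norm_num
  · rw [Finset.prod_mul_distrib, Finset.prod_ite_eq', if_pos (Finset.mem_univ _),
      Finset.prod_inv_distrib, ← Real.sqrt_prod _ fun i _ => (hμ i).le, ← hP_def,
      Real.sqrt_div hP.le, mul_div_assoc', inv_mul_cancel₀ (Real.sqrt_pos.mpr hP).ne', one_div]

section Qubits

variable {n : ℕ}

lemma qInner_self (φ : QubitState n) : qInner φ φ = qNormSq φ := by
  simp only [qInner, qNormSq, ofReal_sum, normSq_eq_conj_mul_self]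

lemma qNormSq_ofReal_smul (c : ℝ) (φ : QubitState n) :
    qNormSq ((c : ℂ) • φ) = c ^ 2 * qNormSq φ :=
  sum_normSq_ofReal_smul c φ

lemma prodOp_ofReal_smul (c : Fin n → ℝ) (g : Fin n → Matrix (Fin 2) (Fin 2) ℂ)
    (ψ : QubitState n) :
    prodOp (fun i => (c i : ℂ) • g i) ψ = ((∏ i, c i : ℝ) : ℂ) • prodOp g ψ := by
  ext x
  simp only [prodOp, Matrix.smul_apply, smul_eq_mul, Finset.prod_mul_distrib, ofReal_prod,
    Pi.smul_apply, Finset.mul_sum, mul_assoc]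

lemma ne_zero_of_prodOp_ne_zero {g : Fin n → Matrix (Fin 2) (Fin 2) ℂ} {ψ : QubitState n}
    (h : prodOp g ψ ≠ 0) (i : Fin n) : g i ≠ 0 := by
  rintro hgi
  refine h (funext fun x => Finset.sum_eq_zero fun y _ => ?_)
  rw [Finset.prod_eq_zero (Finset.mem_univ i) (by simp [hgi]), zero_mul]

lemma prodMatrix_mulVec_prod (g : Fin n → Matrix (Fin 2) (Fin 2) ℂ) (v : Fin n → Fin 2 → ℂ) :
    prodMatrix g *ᵥ (fun y => ∏ i, v i (y i)) = fun x => ∏ i, (g i *ᵥ v i) (x i) := by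
  ext x
  simp only [Matrix.mulVec, dotProduct, prodMatrix, Matrix.of_apply, Fintype.prod_sum,
    Finset.prod_mul_distrib]

lemma prod_lambdaMaxGram_le (g : Fin n → Matrix (Fin 2) (Fin 2) ℂ) :
    ∏ i, lambdaMaxGram (g i) ≤ lambdaMaxGram (prodMatrix g) := by
  choose v hv hmax using fun i => exists_sum_normSq_mulVec_eq_lambdaMaxGram (g i)
  have hunit : ∑ x : Fin n → Fin 2, normSq (∏ i, v i (x i)) = 1 := by
    rw [sum_normSq_prod, Finset.prod_congr rfl fun i _ => hv i, Finset.prod_const_one]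
  have hle := le_lambdaMaxGram (prodMatrix g) hunit
  rwa [prodMatrix_mulVec_prod, sum_normSq_prod, Finset.prod_congr rfl fun i _ => hmax i] at hle

lemma prodMatrix_fin_zero (g : Fin 0 → Matrix (Fin 2) (Fin 2) ℂ) : prodMatrix g = 1 := by
  ext x y
  rw [Subsingleton.elim x y, Matrix.one_apply_eq]
  simp [prodMatrix]

lemma exists_scaling_prodMatrix {g : Fin n → Matrix (Fin 2) (Fin 2) ℂ} (hg : ∀ i, g i ≠ 0) :
    ∃ c : Fin n → ℝ, (∀ i, c i ^ 2 * lambdaMaxGram (g i) ≤ 1) ∧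
      ∏ i, c i = (√(lambdaMaxGram (prodMatrix g)))⁻¹ := by
  cases n with
  | zero => exact ⟨0, finZeroElim, by simp [prodMatrix_fin_zero, lambdaMaxGram_one]⟩
  | succ n =>
    exact exists_sq_mul_le_one_and_prod_eq (fun i => lambdaMaxGram_pos (hg i))
      (prod_lambdaMaxGram_le g)

end Qubits

theorem conversion_probability_achievable_general (n : ℕ)
    (g : Fin n → Matrix (Fin 2) (Fin 2) ℂ)
    (ψ : QubitState n) (hφnorm : qInner (prodOp g ψ) (prodOp g ψ) = 1) :
    ∃ A : Fin n → Matrix (Fin 2) (Fin 2) ℂ,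
      (∀ (k : Fin n) (v : Fin 2 → ℂ),
        (∑ i, Complex.normSq ((A k).mulVec v i)) ≤ ∑ i, Complex.normSq (v i)) ∧
      prodOp A ψ
        = (((Real.sqrt (lambdaMaxGram (prodMatrix g)))⁻¹ : ℝ) : ℂ) • prodOp g ψ ∧
      qNormSq (prodOp A ψ) = 1 / lambdaMaxGram (prodMatrix g) := by
  have hφ : qNormSq (prodOp g ψ) = 1 := by exact_mod_cast (qInner_self _).symm.trans hφnorm
  have hφ0 : prodOp g ψ ≠ 0 := by
    rintro h
    simp [h, qNormSq] at hφ
  obtain ⟨c, hc, hprod⟩ := exists_scaling_prodMatrix (ne_zero_of_prodOp_ne_zero hφ0)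
  have hA : prodOp (fun i => (c i : ℂ) • g i) ψ
      = (((√(lambdaMaxGram (prodMatrix g)))⁻¹ : ℝ) : ℂ) • prodOp g ψ := by
    rw [prodOp_ofReal_smul, hprod]
  refine ⟨fun i => (c i : ℂ) • g i, fun k => sum_normSq_ofReal_smul_mulVec_le (hc k), hA, ?_⟩
  rw [hA, qNormSq_ofReal_smul, hφ, mul_one, inv_pow, Real.sq_sqrt (lambdaMaxGram_nonneg _),
    one_div]

/-- Achievability of the conversion probability `1/λ_max(g†g)`: if `φ = gψ` is normalized
(`g` a product operator with invertible factors), then there are local measurement operators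
`A₁, …, Aₙ` with `Aₖ†Aₖ ≤ I₂` such that `(A₁ ⊗ ⋯ ⊗ Aₙ)ψ = λ_max(g†g)^{-1/2} φ`; in
particular `‖(A₁ ⊗ ⋯ ⊗ Aₙ)ψ‖² = 1/λ_max(g†g)`. -/
theorem conversion_probability_achievable (n : ℕ)
    (g : Fin n → Matrix (Fin 2) (Fin 2) ℂ) (hg : ∀ i, IsUnit (g i))
    (ψ : QubitState n) (hφnorm : qInner (prodOp g ψ) (prodOp g ψ) = 1) :
    ∃ A : Fin n → Matrix (Fin 2) (Fin 2) ℂ,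
      (∀ (k : Fin n) (v : Fin 2 → ℂ),
        (∑ i, Complex.normSq ((A k).mulVec v i)) ≤ ∑ i, Complex.normSq (v i)) ∧
      prodOp A ψ
        = (((Real.sqrt (lambdaMaxGram (prodMatrix g)))⁻¹ : ℝ) : ℂ) • prodOp g ψ ∧
      qNormSq (prodOp A ψ) = 1 / lambdaMaxGram (prodMatrix g) :=
  conversion_probability_achievable_general n g ψ hφnorm
end
end

section
/- Let ψ ∈ H_n be a state whose stabilizer in G = SL(2,ℂ)^{⊗n} is a finite set. If X₁,…,Xₙ are traceless complex 2×2 matrices such that Σ_{k=1}^{n} (I⊗⋯⊗Xₖ⊗⋯⊗I)ψ = 0 (where Xₖ is placed at tensor slot k and the identity acts on all other slots), then Xₖ = 0 for every k. -/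
open scoped BigOperators Matrix
open MeasureTheory

noncomputable section

/-! For traceless `Xᵢ` the curve `t ↦ (exp (t • Xᵢ))ᵢ` lies in `SL(2,ℂ)^n`: conjugating by
`!![0, 1; -1, 0]` turns a traceless `B` into `-Bᵀ`, so `(det (exp B))² = 1`, and `t ↦ det (exp (t • Xᵢ))`
is a continuous map from a connected space into `{1, -1}` which starts at `1`. Its product operator is
`exp (t • A)` with `A = Σₖ I ⊗ ⋯ ⊗ Xₖ ⊗ ⋯ ⊗ I`, since the single-site embeddings are ring homomorphisms
whose images for distinct sites commute. As `A ψ = 0`, the curve lies in the stabilizer; being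
continuous with values in a finite set it is constant, and its derivative at `t = 0` is `(Xᵢ)ᵢ`. -/

open Finset NormedSpace
open scoped Matrix.Norms.Operator

theorem PreconnectedSpace.constant_of_mem_finite {α β : Type*} [TopologicalSpace α]
    [PreconnectedSpace α] [TopologicalSpace β] [T1Space β] {f : α → β} (hf : Continuous f)
    {S : Set β} (hS : S.Finite) (hfS : ∀ a, f a ∈ S) (a b : α) : f a = f b :=
  isPreconnected_univ.constant_of_mapsTo hS.isDiscrete hf.continuousOn (fun a _ => hfS a)
    trivial trivial

theorem eq_zero_of_forall_exp_smul_eq_one {𝕂 𝔸 : Type*} [RCLike 𝕂] [NormedRing 𝔸]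
    [NormedAlgebra 𝕂 𝔸] [CompleteSpace 𝔸] {x : 𝔸} (h : ∀ t : 𝕂, exp (t • x) = 1) : x = 0 := by
  have hderiv := hasDerivAt_exp_smul_const (𝕂 := 𝕂) x 0
  rw [zero_smul, exp_zero, one_mul, funext h] at hderiv
  exact hderiv.unique (hasDerivAt_const 0 1)

namespace Matrix

section PiKronecker

variable {ι m R : Type*} [Fintype ι] [CommRing R]

def piKronecker (g : ι → Matrix m m R) : Matrix (ι → m) (ι → m) R :=
  of fun x y => ∏ i, g i (x i) (y i)

theorem piKronecker_apply (g : ι → Matrix m m R) (x y : ι → m) :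
    piKronecker g x y = ∏ i, g i (x i) (y i) := rfl

theorem continuous_piKronecker [TopologicalSpace R] [IsTopologicalRing R] :
    Continuous (piKronecker : (ι → Matrix m m R) → _) := by
  unfold piKronecker
  fun_prop

theorem piKronecker_one [DecidableEq m] : piKronecker (1 : ι → Matrix m m R) = 1 := by
  ext x y
  simp [piKronecker_apply, one_apply, prod_boole, funext_iff]

variable [DecidableEq ι]

theorem piKronecker_mul [Fintype m] (g h : ι → Matrix m m R) :
    piKronecker (g * h) = piKronecker g * piKronecker h := by
  ext x z
  simp only [piKronecker_apply, Pi.mul_apply, mul_apply, prod_univ_sum, Fintype.piFinset_univ,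
    prod_mul_distrib]

theorem piKronecker_mulSingle_apply [DecidableEq m] (k : ι) (M : Matrix m m R) (x y : ι → m) :
    piKronecker (Pi.mulSingle k M) x y =
      M (x k) (y k) * ∏ i ∈ univ.erase k, (1 : Matrix m m R) (x i) (y i) := by
  rw [piKronecker_apply, ← mul_prod_erase _ _ (mem_univ k), Pi.mulSingle_eq_same]
  congr 1
  refine prod_congr rfl fun i hi => ?_
  rw [Pi.mulSingle_eq_of_ne (ne_of_mem_erase hi)]

variable [Fintype m] [DecidableEq m]

variable (ι m R) in
def piKroneckerHom : (ι → Matrix m m R) →* Matrix (ι → m) (ι → m) R where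
  toFun := piKronecker
  map_one' := piKronecker_one
  map_mul' := piKronecker_mul

/-- `M ↦ 1 ⊗ ⋯ ⊗ M ⊗ ⋯ ⊗ 1`, with `M` at site `k`. -/
def siteEmbedding (k : ι) : Matrix m m R →ₐ[R] Matrix (ι → m) (ι → m) R :=
  .mk' { (piKroneckerHom ι m R).comp (MonoidHom.mulSingle _ k) with
      map_zero' := by ext x y; simp [piKroneckerHom, piKronecker_mulSingle_apply]
      map_add' := fun M N => by
        ext x y; simp [piKroneckerHom, piKronecker_mulSingle_apply, add_mul] }
    fun c M => by ext x y; simp [piKroneckerHom, piKronecker_mulSingle_apply, mul_assoc]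

theorem siteEmbedding_commute {j k : ι} (hjk : j ≠ k) (M N : Matrix m m R) :
    Commute (siteEmbedding j M) (siteEmbedding k N) := by
  have := (Pi.mulSingle_commute hjk M N).map (piKroneckerHom ι m R)
  exact this

theorem continuous_siteEmbedding [TopologicalSpace R] [IsTopologicalRing R] (k : ι) :
    Continuous (siteEmbedding k : Matrix m m R → _) :=
  continuous_piKronecker.comp (continuous_mulSingle (A := fun _ => Matrix m m R) k)

end PiKronecker

theorem semiconjBy_neg_transpose_of_trace_eq_zero {R : Type*} [CommRing R]
    {B : Matrix (Fin 2) (Fin 2) R} (hB : B.trace = 0) :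
    SemiconjBy !![0, 1; -1, 0] B (-Bᵀ) := by
  rw [trace_fin_two] at hB
  ext i j
  fin_cases i <;> fin_cases j <;> simp [mul_apply, Fin.sum_univ_two]
  · linear_combination hB
  · linear_combination -hB

variable {𝕂 : Type*} [RCLike 𝕂]

theorem piKronecker_exp {ι m : Type*} [Fintype ι] [DecidableEq ι] [Fintype m] [DecidableEq m]
    (X : ι → Matrix m m 𝕂) :
    piKronecker (fun i => exp (X i)) = exp (∑ i, siteEmbedding i (X i)) := by
  have hsingle : ((univ : Finset ι) : Set ι).Pairwise fun j k =>
      Commute (Pi.mulSingle j (exp (X j)) : ι → Matrix m m 𝕂) (Pi.mulSingle k (exp (X k))) :=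
    fun j _ k _ hjk => Pi.mulSingle_commute hjk _ _
  have hsite : ((univ : Finset ι) : Set ι).Pairwise fun j k =>
      Commute (siteEmbedding j (X j)) (siteEmbedding k (X k)) :=
    fun j _ k _ hjk => siteEmbedding_commute hjk _ _
  calc piKronecker (fun i => exp (X i))
      = piKroneckerHom ι m 𝕂 (univ.noncommProd (fun i => Pi.mulSingle i (exp (X i))) hsingle) :=
        congrArg (piKroneckerHom ι m 𝕂) (noncommProd_mulSingle _).symm
    _ = univ.noncommProd (fun i => siteEmbedding i (exp (X i))) _ := univ.map_noncommProd _ _ _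
    _ = univ.noncommProd (fun i => exp (siteEmbedding i (X i))) _ :=
        noncommProd_congr rfl (fun i _ => map_exp _ (continuous_siteEmbedding i) _) _
    _ = exp (∑ i, siteEmbedding i (X i)) := (Matrix.exp_sum_of_commute univ _ hsite).symm

theorem exp_mulVec_of_mulVec_eq_zero {m : Type*} [Fintype m] [DecidableEq m]
    {A : Matrix m m 𝕂} {v : m → 𝕂} (hA : A *ᵥ v = 0) : exp A *ᵥ v = v := by
  let L : Matrix m m 𝕂 →+ (m → 𝕂) := AddMonoidHom.mk' (· *ᵥ v) fun M N => add_mulVec M N v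
  refine ((exp_series_hasSum_exp' (𝕂 := 𝕂) A).map L
    (continuous_id.matrix_mulVec continuous_const)).unique ?_
  convert hasSum_single 0 fun k hk => ?_
  · simp [L]
  · obtain ⟨k, rfl⟩ := Nat.exists_eq_succ_of_ne_zero hk
    simp [L, pow_succ, ← mulVec_mulVec, hA, smul_mulVec]

theorem det_exp_neg_of_trace_eq_zero {B : Matrix (Fin 2) (Fin 2) 𝕂} (hB : B.trace = 0) :
    (exp (-B)).det = (exp B).det := by
  have hJ : det !![(0 : 𝕂), 1; -1, 0] = 1 := by simp [det_fin_two_of]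
  have hdet := congrArg det (semiconjBy_neg_transpose_of_trace_eq_zero hB).exp_right
  rw [det_mul, det_mul, hJ, one_mul, mul_one] at hdet
  rw [← det_transpose, ← exp_transpose, transpose_neg]
  exact hdet.symm

theorem det_exp_sq_of_trace_eq_zero {B : Matrix (Fin 2) (Fin 2) 𝕂} (hB : B.trace = 0) :
    (exp B).det ^ 2 = 1 := by
  rw [sq]
  nth_rw 2 [← det_exp_neg_of_trace_eq_zero hB]
  rw [← det_mul, ← exp_add_of_commute _ _ (Commute.refl B).neg_right, add_neg_cancel, exp_zero,
    det_one]

theorem det_exp_smul_of_trace_eq_zero {Y : Matrix (Fin 2) (Fin 2) 𝕂} (hY : Y.trace = 0)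
    (t : 𝕂) : (exp (t • Y)).det = 1 := by
  have hsign : ∀ u : 𝕂, (exp (u • Y)).det ∈ ({1, -1} : Set 𝕂) := fun u => by
    simpa [sq_eq_one_iff] using det_exp_sq_of_trace_eq_zero (B := u • Y) (by simp [hY])
  have := PreconnectedSpace.constant_of_mem_finite (by fun_prop) (Set.toFinite _) hsign t 0
  simpa using this

end Matrix

theorem prodOp_eq_piKronecker_mulVec {n : ℕ} (g : Fin n → Matrix (Fin 2) (Fin 2) ℂ)
    (ψ : QubitState n) : prodOp g ψ = Matrix.piKronecker g *ᵥ ψ := rfl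

/-- If the stabilizer of `ψ` in `G = SL(2,ℂ)^{⊗n}` is finite and `X₁, …, Xₙ` are traceless
`2×2` matrices with `Σₖ (I ⊗ ⋯ ⊗ Xₖ ⊗ ⋯ ⊗ I) ψ = 0` (with `Xₖ` at slot `k`), then all
`Xₖ` vanish. -/
theorem finite_stabilizer_trivial_lie_algebra (n : ℕ) (ψ : QubitState n)
    (hfin : {g : Fin n → Matrix (Fin 2) (Fin 2) ℂ |
      (∀ i, (g i).det = 1) ∧ prodOp g ψ = ψ}.Finite)
    (X : Fin n → Matrix (Fin 2) (Fin 2) ℂ) (htr : ∀ k, (X k).trace = 0)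
    (h : ∑ k : Fin n,
      prodOp (Function.update (fun _ => (1 : Matrix (Fin 2) (Fin 2) ℂ)) k (X k)) ψ
        = 0) :
    ∀ k, X k = 0 := by
  set A := ∑ k, Matrix.siteEmbedding k (X k)
  have hA : A *ᵥ ψ = 0 := by rw [Matrix.sum_mulVec]; exact h
  have hcurve : ∀ t : ℂ, (fun i => exp (t • X i)) ∈
      {g : Fin n → Matrix (Fin 2) (Fin 2) ℂ | (∀ i, (g i).det = 1) ∧ prodOp g ψ = ψ} :=
    fun t => ⟨fun i => Matrix.det_exp_smul_of_trace_eq_zero (htr i) t, by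
      rw [prodOp_eq_piKronecker_mulVec, Matrix.piKronecker_exp]
      simp only [map_smul, ← smul_sum]
      exact Matrix.exp_mulVec_of_mulVec_eq_zero (by rw [Matrix.smul_mulVec, hA, smul_zero])⟩
  intro k
  refine eq_zero_of_forall_exp_smul_eq_one (𝕂 := ℂ) fun t => ?_
  have hconst := PreconnectedSpace.constant_of_mem_finite (f := fun t : ℂ => exp (t • X k))
    (by fun_prop) (hfin.image fun g => g k) (fun t => ⟨_, hcurve t, rfl⟩) t 0
  rwa [zero_smul, exp_zero] at hconst
end
end
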